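/- arXiv:0905.4161 — 17 statements merged into one kernel-verified Lean document; each statement's English description precedes it below -/
import Mathlib

section
/- The polynomial $t_n(x)^2 - (1-x)$, where $t_n(x) = \sum_{k=0}^n \binom{1/2}{k}(-x)^k$ is the $n$-th Taylor polynomial of $\sqrt{1-x}$, has nonnegative coefficients (which lie in $\mathbb{Z}[1/2]$). -/
open Polynomial Finset

/-- The `n`-th Taylor polynomial of `√(1-x)`:
`t_n(x) = ∑_{k=0}^n binom(1/2, k) (-x)^k`, with coefficients in `ℚ`. -/
noncomputable def taylorSqrt (n : ℕ) : Polynomial ℚ :=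
  ∑ k ∈ Finset.range (n + 1),
    Polynomial.C ((∏ i ∈ Finset.range k, ((1 : ℚ) / 2 - (i : ℚ))) / (k.factorial : ℚ)) *
      (-Polynomial.X) ^ k

/-!
The coefficients of `√(1 - x)` are `c₀ = 1` and `c_{k+1} = -C_k / 2^(2k+1)`, where `C_k` is the
`k`-th Catalan number; in particular they are dyadic and nonpositive past the constant term.
Chu–Vandermonde for `binom(1/2, ·)` says that the series squares to `1 - x`, so `t_n²` agrees
with `1 - x` in degrees `≤ n`. In a degree `k > n`, every product `c_i c_j` with `i + j = k`
and `i, j ≤ n` has `i, j ≥ 1`, hence is nonnegative, while the coefficient of `1 - x` is `≤ 0`.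
-/

theorem Ring.choose_eq_prod_div {K : Type*} [Field K] [CharZero K] (a : K) (n : ℕ) :
    Ring.choose a n = (∏ j ∈ range n, (a - j)) / n.factorial := by
  rw [Ring.choose_eq_smul, ← aeval_eq_smeval, aeval_def, eval₂_eq_eval_map, descPochhammer_map,
    descPochhammer_eval_eq_prod_range, smul_eq_mul, inv_mul_eq_div]

noncomputable def sqrtOneSubCoeff (k : ℕ) : ℚ := Ring.choose (1 / 2 : ℚ) k * (-1) ^ k

theorem coeff_taylorSqrt (n k : ℕ) :
    (taylorSqrt n).coeff k = if k ≤ n then sqrtOneSubCoeff k else 0 := by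
  simp only [taylorSqrt, finsetSum_coeff, neg_pow (X : ℚ[X]), ← C_1, ← C_neg, ← C_pow, ← mul_assoc,
    ← C_mul, coeff_C_mul_X_pow]
  simp [sqrtOneSubCoeff, Ring.choose_eq_prod_div]

theorem sum_antidiagonal_sqrtOneSubCoeff_mul (k : ℕ) :
    ∑ p ∈ antidiagonal k, sqrtOneSubCoeff p.1 * sqrtOneSubCoeff p.2 = (1 - X : ℚ[X]).coeff k := by
  have vandermonde := Ring.add_choose_eq (r := (1 / 2 : ℚ)) (s := 1 / 2) k (Commute.all _ _)
  have choose_one : Ring.choose (1 : ℚ) k = Nat.choose 1 k := by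
    simpa using Ring.choose_natCast (R := ℚ) 1 k
  rw [add_halves, choose_one] at vandermonde
  calc ∑ p ∈ antidiagonal k, sqrtOneSubCoeff p.1 * sqrtOneSubCoeff p.2
      = (∑ p ∈ antidiagonal k, Ring.choose (1 / 2 : ℚ) p.1 * Ring.choose (1 / 2 : ℚ) p.2) *
          (-1) ^ k := by
        rw [sum_mul]
        refine sum_congr rfl fun p hp => ?_
        rw [← mem_antidiagonal.mp hp, sqrtOneSubCoeff, sqrtOneSubCoeff, pow_add]
        ring
    _ = (1 - X : ℚ[X]).coeff k := by
        rw [← vandermonde]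
        rcases k with _ | _ | k <;> simp [coeff_one, coeff_X, Nat.choose_eq_zero_of_lt]

theorem Nat.succ_mul_catalan_succ (n : ℕ) :
    (n + 2) * catalan (n + 1) = 2 * (2 * n + 1) * catalan n := by
  apply Nat.eq_of_mul_eq_mul_left n.succ_pos
  calc (n + 1) * ((n + 2) * catalan (n + 1))
      = (n + 1) * ((n + 1 + 1) * catalan (n + 1)) := rfl
    _ = (n + 1) * centralBinom (n + 1) := by rw [succ_mul_catalan_eq_centralBinom]
    _ = 2 * (2 * n + 1) * ((n + 1) * catalan n) := by
        rw [Nat.succ_mul_centralBinom_succ, succ_mul_catalan_eq_centralBinom]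
    _ = (n + 1) * (2 * (2 * n + 1) * catalan n) := by ring

theorem succ_mul_sqrtOneSubCoeff_succ (k : ℕ) :
    (k + 1) * sqrtOneSubCoeff (k + 1) = (k - 1 / 2) * sqrtOneSubCoeff k := by
  simp only [sqrtOneSubCoeff, Ring.choose_eq_prod_div, prod_range_succ, Nat.factorial_succ,
    pow_succ]
  push_cast
  field_simp
  ring

theorem sqrtOneSubCoeff_succ (k : ℕ) :
    sqrtOneSubCoeff (k + 1) = -catalan k / 2 ^ (2 * k + 1) := by
  induction k with
  | zero => norm_num [sqrtOneSubCoeff, Ring.choose_one_right]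
  | succ k ih =>
    have h := succ_mul_sqrtOneSubCoeff_succ (k + 1)
    have hcat : ((k + 2 : ℕ) : ℚ) * catalan (k + 1) = 2 * (2 * k + 1) * catalan k := by
      exact_mod_cast Nat.succ_mul_catalan_succ k
    rw [ih] at h
    push_cast at h hcat
    field_simp at h ⊢
    apply mul_left_cancel₀ (show (k : ℚ) + 2 ≠ 0 by positivity)
    linear_combination 2 * h + hcat

theorem sqrtOneSubCoeff_nonpos {k : ℕ} (hk : k ≠ 0) : sqrtOneSubCoeff k ≤ 0 := by
  obtain ⟨k, rfl⟩ := Nat.exists_eq_succ_of_ne_zero hk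
  rw [sqrtOneSubCoeff_succ]
  exact div_nonpos_of_nonpos_of_nonneg (by simp) (by positivity)

theorem coeff_taylorSqrt_of_lt {n k : ℕ} (hk : n < k) : (taylorSqrt n).coeff k = 0 := by
  rw [coeff_taylorSqrt, if_neg hk.not_ge]

theorem coeff_taylorSqrt_nonpos (n : ℕ) {k : ℕ} (hk : k ≠ 0) : (taylorSqrt n).coeff k ≤ 0 := by
  rw [coeff_taylorSqrt]
  split_ifs
  exacts [sqrtOneSubCoeff_nonpos hk, le_rfl]

theorem coeff_taylorSqrt_sq_of_le {n k : ℕ} (hk : k ≤ n) :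
    (taylorSqrt n ^ 2).coeff k = (1 - X : ℚ[X]).coeff k := by
  rw [sq, coeff_mul, ← sum_antidiagonal_sqrtOneSubCoeff_mul]
  refine sum_congr rfl fun p hp => ?_
  have hpk := mem_antidiagonal.mp hp
  rw [coeff_taylorSqrt, coeff_taylorSqrt, if_pos (by omega), if_pos (by omega)]

theorem coeff_taylorSqrt_sq_nonneg_of_lt {n k : ℕ} (hk : n < k) :
    0 ≤ (taylorSqrt n ^ 2).coeff k := by
  rw [sq, coeff_mul]
  refine sum_nonneg fun p hp => ?_
  have hpk := mem_antidiagonal.mp hp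
  by_cases h₁ : p.1 = 0
  · rw [coeff_taylorSqrt_of_lt (k := p.2) (by omega), mul_zero]
  by_cases h₂ : p.2 = 0
  · rw [coeff_taylorSqrt_of_lt (k := p.1) (by omega), zero_mul]
  exact mul_nonneg_of_nonpos_of_nonpos (coeff_taylorSqrt_nonpos n h₁)
    (coeff_taylorSqrt_nonpos n h₂)

theorem coeff_one_sub_X_nonpos {R : Type*} [Ring R] [PartialOrder R] [IsOrderedRing R]
    {k : ℕ} (hk : k ≠ 0) : (1 - X : R[X]).coeff k ≤ 0 := by
  rw [coeff_sub, coeff_one, if_neg hk, coeff_X, zero_sub, neg_nonpos]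
  split_ifs <;> simp

theorem coeff_taylorSqrt_sq_sub_nonneg (n k : ℕ) :
    0 ≤ (taylorSqrt n ^ 2 - (1 - X)).coeff k := by
  rw [coeff_sub, sub_nonneg]
  rcases le_or_gt k n with hk | hk
  · exact (coeff_taylorSqrt_sq_of_le hk).ge
  · exact (coeff_one_sub_X_nonpos (by omega)).trans (coeff_taylorSqrt_sq_nonneg_of_lt hk)

def dyadicRat : Subring ℚ where
  carrier := {q | ∃ (z : ℤ) (m : ℕ), q = z / 2 ^ m}
  zero_mem' := ⟨0, 0, by simp⟩
  one_mem' := ⟨1, 0, by simp⟩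
  neg_mem' := by
    rintro _ ⟨z, m, rfl⟩
    exact ⟨-z, m, by push_cast; ring⟩
  add_mem' := by
    rintro _ _ ⟨z, m, rfl⟩ ⟨z', m', rfl⟩
    exact ⟨z * 2 ^ m' + z' * 2 ^ m, m + m', by push_cast; field_simp; ring⟩
  mul_mem' := by
    rintro _ _ ⟨z, m, rfl⟩ ⟨z', m', rfl⟩
    exact ⟨z * z', m + m', by push_cast; field_simp; ring⟩

theorem mem_dyadicRat {q : ℚ} : q ∈ dyadicRat ↔ ∃ (z : ℤ) (m : ℕ), q = z / 2 ^ m := Iff.rfl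

theorem sqrtOneSubCoeff_mem_dyadicRat (k : ℕ) : sqrtOneSubCoeff k ∈ dyadicRat := by
  cases k with
  | zero => exact mem_dyadicRat.mpr ⟨1, 0, by simp [sqrtOneSubCoeff]⟩
  | succ k =>
    exact mem_dyadicRat.mpr ⟨-catalan k, 2 * k + 1, by rw [sqrtOneSubCoeff_succ]; push_cast; ring⟩

theorem taylorSqrt_mem_liftsRing (n : ℕ) : taylorSqrt n ∈ liftsRing dyadicRat.subtype := by
  rw [← lifts_iff_liftsRing, lifts_iff_coeff_lifts]
  intro k
  rw [Subring.coe_subtype, Subtype.range_coe, coeff_taylorSqrt]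
  split_ifs
  exacts [sqrtOneSubCoeff_mem_dyadicRat k, zero_mem _]

theorem coeff_taylorSqrt_sq_sub_mem_dyadicRat (n k : ℕ) :
    (taylorSqrt n ^ 2 - (1 - X)).coeff k ∈ dyadicRat := by
  have hX : X ∈ liftsRing dyadicRat.subtype := (lifts_iff_liftsRing _ _).mp (X_mem_lifts _)
  have hmem := sub_mem (pow_mem (taylorSqrt_mem_liftsRing n) 2) (sub_mem (one_mem _) hX)
  rw [← lifts_iff_liftsRing, lifts_iff_coeff_lifts] at hmem
  simpa using hmem k

/-- The polynomial `t_n(x)^2 - (1 - x)` has nonnegative coefficients, and these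
coefficients lie in `ℤ[1/2]`. -/
theorem taylorSqrt_sq_sub_nonneg_coeff (n : ℕ) (k : ℕ) :
    0 ≤ ((taylorSqrt n) ^ 2 - (1 - Polynomial.X)).coeff k ∧
      ∃ (z : ℤ) (m : ℕ),
        ((taylorSqrt n) ^ 2 - (1 - Polynomial.X)).coeff k = (z : ℚ) / 2 ^ m :=
  ⟨coeff_taylorSqrt_sq_sub_nonneg n k, mem_dyadicRat.mp (coeff_taylorSqrt_sq_sub_mem_dyadicRat n k)⟩
end

section
/- Let $M_1, M_2$ be additive subsemigroups (containing 0) of a commutative ring $A$, and let $u_1 \in M_1$, $u_2 \in M_2$. If $a_1 \in O(M_1, u_1)$ and $a_2 \in O(M_2, u_2)$, then $a_1 a_2 \in O(M_1 M_2, u_1 u_2)$, where $M_1 M_2$ is the additive semigroup generated by products $x_1 x_2$ with $x_i \in M_i$. -/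
/-- `O(M, u) = {a ∈ A : ∃ n ∈ ℕ, nu + a ∈ M and nu - a ∈ M}`. -/
def boundedBy {A : Type*} [CommRing A] (M : Set A) (u : A) : Set A :=
  {a | ∃ n : ℕ, n • u + a ∈ M ∧ n • u - a ∈ M}

private lemma nsmul_mem_aux {A : Type*} [CommRing A] {M : Set A}
    (h0 : (0 : A) ∈ M) (hadd : ∀ x ∈ M, ∀ y ∈ M, x + y ∈ M)
    {u : A} (hu : u ∈ M) : ∀ n : ℕ, n • u ∈ M := by
  intro n
  induction n with
  | zero => simpa using h0
  | succ k ih => rw [succ_nsmul]; exact hadd _ ih _ hu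

/-- If `a₁ ∈ O(M₁,u₁)` and `a₂ ∈ O(M₂,u₂)`, then `a₁a₂ ∈ O(M₁M₂, u₁u₂)`, where
`M₁M₂` is the additive semigroup generated by the products `x₁x₂`, `xᵢ ∈ Mᵢ`. -/
theorem mul_mem_boundedBy_mul {A : Type*} [CommRing A] (M₁ M₂ : Set A)
    (h0₁ : (0 : A) ∈ M₁) (h0₂ : (0 : A) ∈ M₂)
    (hadd₁ : ∀ x ∈ M₁, ∀ y ∈ M₁, x + y ∈ M₁)
    (hadd₂ : ∀ x ∈ M₂, ∀ y ∈ M₂, x + y ∈ M₂)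
    (u₁ : A) (hu₁ : u₁ ∈ M₁) (u₂ : A) (hu₂ : u₂ ∈ M₂)
    (a₁ a₂ : A) (ha₁ : a₁ ∈ boundedBy M₁ u₁) (ha₂ : a₂ ∈ boundedBy M₂ u₂) :
    a₁ * a₂ ∈ boundedBy
      (AddSubmonoid.closure {z : A | ∃ x ∈ M₁, ∃ y ∈ M₂, z = x * y} : Set A)
      (u₁ * u₂) := by
  obtain ⟨n₁, h₁p, h₁m⟩ := ha₁
  obtain ⟨n₂, h₂p, h₂m⟩ := ha₂
  set S := {z : A | ∃ x ∈ M₁, ∃ y ∈ M₂, z = x * y}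
  have hs₁ : n₁ • u₁ ∈ M₁ := nsmul_mem_aux h0₁ hadd₁ hu₁ n₁
  have hs₂ : n₂ • u₂ ∈ M₂ := nsmul_mem_aux h0₂ hadd₂ hu₂ n₂
  have mem : ∀ x ∈ M₁, ∀ y ∈ M₂, x * y ∈ AddSubmonoid.closure S := fun x hx y hy =>
    AddSubmonoid.subset_closure ⟨x, hx, y, hy, rfl⟩
  refine ⟨3 * n₁ * n₂, ?_, ?_⟩
  · have key : (3 * n₁ * n₂) • (u₁ * u₂) + a₁ * a₂ =
        (n₁ • u₁ + a₁) * (n₂ • u₂ + a₂) + (n₁ • u₁ - a₁) * (n₂ • u₂)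
          + (n₁ • u₁) * (n₂ • u₂ - a₂) := by
      simp only [nsmul_eq_mul]; push_cast; ring
    rw [key]
    exact AddSubmonoid.add_mem _ (AddSubmonoid.add_mem _ (mem _ h₁p _ h₂p)
      (mem _ h₁m _ hs₂)) (mem _ hs₁ _ (by simpa using h₂m))
  · have key : (3 * n₁ * n₂) • (u₁ * u₂) - a₁ * a₂ =
        (n₁ • u₁ + a₁) * (n₂ • u₂ - a₂) + (n₁ • u₁ - a₁) * (n₂ • u₂)
          + (n₁ • u₁) * (n₂ • u₂ + a₂) := by
      simp only [nsmul_eq_mul]; push_cast; ring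
    rw [key]
    exact AddSubmonoid.add_mem _ (AddSubmonoid.add_mem _ (mem _ h₁p _ h₂m)
      (mem _ h₁m _ hs₂)) (mem _ hs₁ _ h₂p)
end

section
/- Let $A$ be a commutative ring with $1/2 \in A$ and let $M \subseteq A$ be a quadratic module (i.e., $0, 1 \in M$, $M + M \subseteq M$, and $a^2 M \subseteq M$ for all $a \in A$). Then $O(M,1)$ is a subring of $A$. -/
/-- If `1/2 ∈ A` and `M ⊆ A` is a quadratic module, then `O(M,1)` is a subring of `A`. -/
theorem boundedBy_one_subring_of_quadraticModule {A : Type*} [CommRing A]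
    (half : A) (hhalf : 2 * half = 1) (M : Set A)
    (h0 : (0 : A) ∈ M) (h1 : (1 : A) ∈ M)
    (hadd : ∀ x ∈ M, ∀ y ∈ M, x + y ∈ M)
    (hsq : ∀ a : A, ∀ m ∈ M, a ^ 2 * m ∈ M) :
    ∃ B : Subring A, (B : Set A) = boundedBy M 1 := by
  have hmem : ∀ a : A, a ∈ boundedBy M 1 ↔
      ∃ n : ℕ, ((n : A) + a ∈ M ∧ (n : A) - a ∈ M) := by
    intro a
    simp [boundedBy, nsmul_eq_mul]
  have hnat : ∀ n : ℕ, ((n : A)) ∈ M := by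
    intro n
    induction n with
    | zero => simpa using h0
    | succ k ih => push_cast; exact hadd _ ih _ h1
  have hO0 : (0 : A) ∈ boundedBy M 1 :=
    (hmem 0).2 ⟨0, by simpa using h0, by simpa using h0⟩
  have hO1 : (1 : A) ∈ boundedBy M 1 :=
    (hmem 1).2 ⟨1, by simpa using hadd _ h1 _ h1, by simpa using h0⟩
  have hOadd : ∀ a ∈ boundedBy M 1, ∀ b ∈ boundedBy M 1, a + b ∈ boundedBy M 1 := by
    intro a ha b hb
    obtain ⟨n, hn1, hn2⟩ := (hmem a).1 ha
    obtain ⟨m, hm1, hm2⟩ := (hmem b).1 hb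
    refine (hmem _).2 ⟨n + m, ?_, ?_⟩
    · have h := hadd _ hn1 _ hm1
      have e : ((n + m : ℕ) : A) + (a + b) = ((n : A) + a) + ((m : A) + b) := by
        push_cast; ring
      rw [e]; exact h
    · have h := hadd _ hn2 _ hm2
      have e : ((n + m : ℕ) : A) - (a + b) = ((n : A) - a) + ((m : A) - b) := by
        push_cast; ring
      rw [e]; exact h
  have hOneg : ∀ a ∈ boundedBy M 1, -a ∈ boundedBy M 1 := by
    intro a ha
    obtain ⟨n, hn1, hn2⟩ := (hmem a).1 ha
    refine (hmem _).2 ⟨n, ?_, ?_⟩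
    · have e : (n : A) + -a = (n : A) - a := by ring
      rw [e]; exact hn2
    · have e : (n : A) - -a = (n : A) + a := by ring
      rw [e]; exact hn1
  have hOhalf : ∀ a ∈ boundedBy M 1, half * a ∈ boundedBy M 1 := by
    intro a ha
    obtain ⟨n, hn1, hn2⟩ := (hmem a).1 ha
    refine (hmem _).2 ⟨n, ?_, ?_⟩
    · have t1 := hsq half _ (hadd _ hn1 _ hn1)
      have t2 := hsq half _ (hnat (2 * n))
      have h := hadd _ t1 _ t2
      have e : (n : A) + half * a =
          half ^ 2 * (((n : A) + a) + ((n : A) + a)) + half ^ 2 * ((2 * n : ℕ) : A) := by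
        push_cast
        linear_combination (-((n : A) * (2 * half + 1) + half * a)) * hhalf
      rw [e]; exact h
    · have t1 := hsq half _ (hadd _ hn2 _ hn2)
      have t2 := hsq half _ (hnat (2 * n))
      have h := hadd _ t1 _ t2
      have e : (n : A) - half * a =
          half ^ 2 * (((n : A) - a) + ((n : A) - a)) + half ^ 2 * ((2 * n : ℕ) : A) := by
        push_cast
        linear_combination (-((n : A) * (2 * half + 1) - half * a)) * hhalf
      rw [e]; exact h
  have hasq : ∀ a : A, a * a ∈ M := by
    intro a
    have := hsq a 1 h1
    rwa [mul_one, pow_two] at this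
  have hOsq : ∀ a ∈ boundedBy M 1, a * a ∈ boundedBy M 1 := by
    intro a ha
    obtain ⟨n, hn1, hn2⟩ := (hmem a).1 ha
    refine (hmem _).2 ⟨n * (n + 1) ^ 2, ?_, ?_⟩
    · have h := hadd _ (hnat (n * (n + 1) ^ 2)) _ (hasq a)
      exact h
    · have E1 := hsq (half * ((n : A) + 1) - a) _ hn1
      have E2 := hsq (half * ((n : A) + 1) + a) _ hn2
      have S := hadd _ E1 _ E2
      have T := hadd _ S _ S
      have U := hadd _ (hadd _ (hadd _ T _ (hasq a)) _ (hasq a)) _ (hasq a)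
      have e : ((n * (n + 1) ^ 2 : ℕ) : A) - a * a =
          ((half * ((n : A) + 1) - a) ^ 2 * ((n : A) + a) +
            (half * ((n : A) + 1) + a) ^ 2 * ((n : A) - a) +
           ((half * ((n : A) + 1) - a) ^ 2 * ((n : A) + a) +
            (half * ((n : A) + 1) + a) ^ 2 * ((n : A) - a)) + a * a + a * a + a * a) := by
        push_cast
        linear_combination (4 * a ^ 2 * ((n : A) + 1) -
          (n : A) * ((n : A) + 1) ^ 2 * (2 * half + 1)) * hhalf
      rw [e]; exact U
  have hOmul : ∀ a ∈ boundedBy M 1, ∀ b ∈ boundedBy M 1, a * b ∈ boundedBy M 1 := by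
    intro a ha b hb
    have m1 := hOhalf _ (hOhalf _ (hOsq _ (hOadd _ ha _ hb)))
    have m2 := hOneg _ (hOhalf _ (hOhalf _ (hOsq _ (hOadd _ ha _ (hOneg _ hb)))))
    have h := hOadd _ m1 _ m2
    have e : a * b = half * (half * ((a + b) * (a + b))) +
        -(half * (half * ((a + -b) * (a + -b)))) := by
      linear_combination (-(a * b) * (2 * half + 1)) * hhalf
    rw [e]; exact h
  exact ⟨{ carrier := boundedBy M 1
           zero_mem' := hO0
           one_mem' := hO1
           add_mem' := fun {x y} hx hy => hOadd x hx y hy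
           neg_mem' := fun {x} hx => hOneg x hx
           mul_mem' := fun {x y} hx hy => hOmul x hx y hy }, rfl⟩
end

section
/- Let $A$ be a commutative ring with $1/2 \in A$, $M \subseteq A$ a quadratic module, and $u \in M$ with $uM \subseteq M$. Then $O(M,u)$ is an $O(M,1)$-submodule of $A$. -/
/-- If `1/2 ∈ A`, `M` is a quadratic module in `A` and `u ∈ M` satisfies `uM ⊆ M`,
then `O(M,u)` is an `O(M,1)`-submodule of `A`. -/
theorem boundedBy_submodule_of_quadraticModule {A : Type*} [CommRing A]
    (half : A) (hhalf : 2 * half = 1) (M : Set A)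
    (h0 : (0 : A) ∈ M) (h1 : (1 : A) ∈ M)
    (hadd : ∀ x ∈ M, ∀ y ∈ M, x + y ∈ M)
    (hsq : ∀ a : A, ∀ m ∈ M, a ^ 2 * m ∈ M)
    (u : A) (hu : u ∈ M) (huM : ∀ m ∈ M, u * m ∈ M) :
    (0 : A) ∈ boundedBy M u ∧
    (∀ x ∈ boundedBy M u, ∀ y ∈ boundedBy M u, x + y ∈ boundedBy M u) ∧
    (∀ x ∈ boundedBy M u, -x ∈ boundedBy M u) ∧
    (∀ a ∈ boundedBy M 1, ∀ x ∈ boundedBy M u, a * x ∈ boundedBy M u) := by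
  -- multiplication by `half` preserves `M`
  have hhalfM : ∀ z ∈ M, half * z ∈ M := by
    intro z hz
    have h2 := hadd _ (hsq half z hz) _ (hsq half z hz)
    have heq : half * z = half ^ 2 * z + half ^ 2 * z := by
      linear_combination (-1*half*z) * hhalf
    rw [heq]; exact h2
  -- natural multiples preserve `M`
  have hnsmul : ∀ k : ℕ, ∀ z ∈ M, (k : A) * z ∈ M := by
    intro k
    induction k with
    | zero => intro z hz; simpa using h0
    | succ k ih =>
        intro z hz
        have := hadd _ (ih z hz) _ hz
        have heq : ((k + 1 : ℕ) : A) * z = (k : A) * z + z := by push_cast; ring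
        rw [heq]; exact this
  refine ⟨⟨0, by simpa using h0⟩, ?_, ?_, ?_⟩
  · rintro x ⟨nx, hx1, hx2⟩ y ⟨ny, hy1, hy2⟩
    refine ⟨nx + ny, ?_, ?_⟩
    · have := hadd _ hx1 _ hy1
      have heq : (nx + ny) • u + (x + y) = (nx • u + x) + (ny • u + y) := by
        simp [add_smul]; ring
      rw [heq]; exact this
    · have := hadd _ hx2 _ hy2
      have heq : (nx + ny) • u - (x + y) = (nx • u - x) + (ny • u - y) := by
        simp [add_smul]; ring
      rw [heq]; exact this
  · rintro x ⟨nx, hx1, hx2⟩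
    exact ⟨nx, by simpa [sub_eq_add_neg] using hx2, by simpa [sub_eq_add_neg] using hx1⟩
  · rintro a ⟨n, ha1, ha2⟩ x ⟨m, hx1, hx2⟩
    rw [nsmul_eq_mul, mul_one] at ha1 ha2
    rw [nsmul_eq_mul] at hx1 hx2
    -- the two "T" elements
    have hT1 : half * (1 + a ^ 2) * ((m : A) * u) + a * x ∈ M := by
      have hmem := hadd _ (hsq (half * (1 + a)) _ hx1) _ (hsq (half * (1 - a)) _ hx2)
      have heq : half * (1 + a ^ 2) * ((m : A) * u) + a * x
          = (half * (1 + a)) ^ 2 * ((m : A) * u + x)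
            + (half * (1 - a)) ^ 2 * ((m : A) * u - x) := by
        linear_combination ((-1*a*x) + (-1*half*u*(m:A)) + (-2*half*a*x)
          + (-1*half*a^2*u*(m:A))) * hhalf
      rw [heq]; exact hmem
    have hT2 : half * (1 + a ^ 2) * ((m : A) * u) - a * x ∈ M := by
      have hmem := hadd _ (hsq (half * (1 - a)) _ hx1) _ (hsq (half * (1 + a)) _ hx2)
      have heq : half * (1 + a ^ 2) * ((m : A) * u) - a * x
          = (half * (1 - a)) ^ 2 * ((m : A) * u + x)
            + (half * (1 + a)) ^ 2 * ((m : A) * u - x) := by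
        linear_combination ((a*x) + (-1*half*u*(m:A)) + (2*half*a*x)
          + (-1*half*a^2*u*(m:A))) * hhalf
      rw [heq]; exact hmem
    -- the bound on `a^2 * u`
    set α : A := -half - (n : A) * half ^ 2 with hα
    have hD : (4 * (n : A) + 4 * (n : A) ^ 2 + (n : A) ^ 3) * half ^ 3 * u - a ^ 2 * u ∈ M := by
      have hmem := hadd _ (hsq (α + half * a) _ (huM _ ha1)) _
        (hsq (α - half * a) _ (huM _ ha2))
      have heq : (4 * (n : A) + 4 * (n : A) ^ 2 + (n : A) ^ 3) * half ^ 3 * u - a ^ 2 * u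
          = (α + half * a) ^ 2 * (u * ((n : A) + a))
            + (α - half * a) ^ 2 * (u * ((n : A) - a)) := by
        rw [hα]
        linear_combination ((a^2*u) + (2*half*a^2*u) + (2*half^2*u*(n:A))
          + (2*half^2*a^2*u*(n:A)) + (-1*half^3*u*(n:A)^3)) * hhalf
      rw [heq]; exact hmem
    -- assemble
    set K : ℕ := m * (8 + (4 * n + 4 * n ^ 2 + n ^ 3)) with hK
    have hD2 : half * ((m : A) *
        ((4 * (n : A) + 4 * (n : A) ^ 2 + (n : A) ^ 3) * half ^ 3 * u - a ^ 2 * u)) ∈ M :=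
      hhalfM _ (hnsmul m _ hD)
    have hQ : (half ^ 2) ^ 2 * (((15 * K : ℕ) : A) * u) ∈ M :=
      hsq (half ^ 2) _ (hnsmul (15 * K) u hu)
    refine ⟨K, ?_, ?_⟩
    · have hmem := hadd _ (hadd _ hT1 _ hD2) _ hQ
      have heq : K • u + a * x
          = (half * (1 + a ^ 2) * ((m : A) * u) + a * x)
            + half * ((m : A) *
              ((4 * (n : A) + 4 * (n : A) ^ 2 + (n : A) ^ 3) * half ^ 3 * u - a ^ 2 * u))
            + (half ^ 2) ^ 2 * (((15 * K : ℕ) : A) * u) := by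
        rw [nsmul_eq_mul, hK]
        push_cast
        linear_combination ((-8*u*(m:A)) + (-4*u*(n:A)*(m:A)) + (-4*u*(n:A)^2*(m:A))
          + (-1*u*(n:A)^3*(m:A)) + (-15*half*u*(m:A)) + (-8*half*u*(n:A)*(m:A))
          + (-8*half*u*(n:A)^2*(m:A)) + (-2*half*u*(n:A)^3*(m:A)) + (-30*half^2*u*(m:A))
          + (-16*half^2*u*(n:A)*(m:A)) + (-16*half^2*u*(n:A)^2*(m:A))
          + (-4*half^2*u*(n:A)^3*(m:A)) + (-60*half^3*u*(m:A)) + (-32*half^3*u*(n:A)*(m:A))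
          + (-32*half^3*u*(n:A)^2*(m:A)) + (-8*half^3*u*(n:A)^3*(m:A))) * hhalf
      rw [heq]; exact hmem
    · have hmem := hadd _ (hadd _ hT2 _ hD2) _ hQ
      have heq : K • u - a * x
          = (half * (1 + a ^ 2) * ((m : A) * u) - a * x)
            + half * ((m : A) *
              ((4 * (n : A) + 4 * (n : A) ^ 2 + (n : A) ^ 3) * half ^ 3 * u - a ^ 2 * u))
            + (half ^ 2) ^ 2 * (((15 * K : ℕ) : A) * u) := by
        rw [nsmul_eq_mul, hK]
        push_cast
        linear_combination ((-8*u*(m:A)) + (-4*u*(n:A)*(m:A)) + (-4*u*(n:A)^2*(m:A))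
          + (-1*u*(n:A)^3*(m:A)) + (-15*half*u*(m:A)) + (-8*half*u*(n:A)*(m:A))
          + (-8*half*u*(n:A)^2*(m:A)) + (-2*half*u*(n:A)^3*(m:A)) + (-30*half^2*u*(m:A))
          + (-16*half^2*u*(n:A)*(m:A)) + (-16*half^2*u*(n:A)^2*(m:A))
          + (-4*half^2*u*(n:A)^3*(m:A)) + (-60*half^3*u*(m:A)) + (-32*half^3*u*(n:A)*(m:A))
          + (-32*half^3*u*(n:A)^2*(m:A)) + (-8*half^3*u*(n:A)^3*(m:A))) * hhalf
      rw [heq]; exact hmem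
end

section
/- Let $S$ be an archimedean subsemiring of a commutative ring $A$ (i.e., $A = \mathbb{Z} + S$) and let $M \subseteq A$ be an $S$-pseudomodule ($0 \in M$, $M+M \subseteq M$, $SM \subseteq M$). Then for every $f \in M$, one has $O(M, f) = \mathrm{supp}(M + Af) := (M+Af) \cap -(M+Af)$, and this set is an ideal of $A$. -/
/-- `M + Af = {m + af : m ∈ M, a ∈ A}`. -/
def addMulSet {A : Type*} [CommRing A] (M : Set A) (f : A) : Set A :=
  {g | ∃ m ∈ M, ∃ a : A, g = m + a * f}

/-- If `S` is an archimedean subsemiring of `A` and `M` an `S`-pseudomodule, then for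
every `f ∈ M` one has `O(M,f) = supp(M + Af) = (M + Af) ∩ -(M + Af)`, and this is an
ideal of `A`. -/
theorem boundedBy_eq_supp {A : Type*} [CommRing A] (S M : Set A)
    (hS0 : (0 : A) ∈ S) (hS1 : (1 : A) ∈ S)
    (hSadd : ∀ x ∈ S, ∀ y ∈ S, x + y ∈ S)
    (hSmul : ∀ x ∈ S, ∀ y ∈ S, x * y ∈ S)
    (harch : ∀ a : A, ∃ n : ℕ, (n : A) - a ∈ S)
    (hM0 : (0 : A) ∈ M) (hMadd : ∀ x ∈ M, ∀ y ∈ M, x + y ∈ M)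
    (hSM : ∀ s ∈ S, ∀ m ∈ M, s * m ∈ M)
    (f : A) (hf : f ∈ M) :
    boundedBy M f = addMulSet M f ∩ (-(addMulSet M f)) ∧
    ∃ J : Ideal A, (J : Set A) = boundedBy M f := by
  have hMn : ∀ (k : ℕ), ∀ x ∈ M, k • x ∈ M := by
    intro k x hx
    induction k with
    | zero => simpa using hM0
    | succ k ih => rw [succ_nsmul]; exact hMadd _ ih _ hx
  -- closure of boundedBy under addition
  have hOadd : ∀ a ∈ boundedBy M f, ∀ b ∈ boundedBy M f, a + b ∈ boundedBy M f := by
    rintro a ⟨n, h1, h2⟩ b ⟨n', h1', h2'⟩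
    refine ⟨n + n', ?_, ?_⟩
    · have := hMadd _ h1 _ h1'
      convert this using 1
      simp only [nsmul_eq_mul]; push_cast; ring
    · have := hMadd _ h2 _ h2'
      convert this using 1
      simp only [nsmul_eq_mul]; push_cast; ring
  have hOneg : ∀ a ∈ boundedBy M f, -a ∈ boundedBy M f := by
    rintro a ⟨n, h1, h2⟩
    exact ⟨n, by simpa [sub_eq_add_neg] using h2, by simpa [sub_neg_eq_add] using h1⟩
  -- closure under multiplication by elements of S
  have hOmulS : ∀ s ∈ S, ∀ a ∈ boundedBy M f, s * a ∈ boundedBy M f := by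
    rintro s hs a ⟨n, h1, h2⟩
    obtain ⟨m, hm⟩ := harch (s * (n : A))
    refine ⟨m, ?_, ?_⟩
    · have := hMadd _ (hSM _ hs _ h1) _ (hSM _ hm _ hf)
      convert this using 1
      simp only [nsmul_eq_mul]; ring
    · have := hMadd _ (hSM _ hs _ h2) _ (hSM _ hm _ hf)
      convert this using 1
      simp only [nsmul_eq_mul]; ring
  -- closure under multiplication by arbitrary elements
  have hOmul : ∀ (c : A), ∀ a ∈ boundedBy M f, c * a ∈ boundedBy M f := by
    rintro c a ha
    obtain ⟨k, hk⟩ := harch c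
    have hka : (k : A) * a ∈ boundedBy M f := by
      obtain ⟨n, h1, h2⟩ := ha
      refine ⟨k * n, ?_, ?_⟩
      · have := hMn k _ h1
        convert this using 1
        simp only [nsmul_eq_mul]; push_cast; ring
      · have := hMn k _ h2
        convert this using 1
        simp only [nsmul_eq_mul]; push_cast; ring
    have hsa : ((k : A) - c) * a ∈ boundedBy M f := hOmulS _ hk _ ha
    have : c * a = (k : A) * a + -(((k : A) - c) * a) := by ring
    rw [this]
    exact hOadd _ hka _ (hOneg _ hsa)
  have hO0 : (0 : A) ∈ boundedBy M f := ⟨0, by simpa using hM0, by simpa using hM0⟩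
  constructor
  · ext a
    constructor
    · rintro ⟨n, h1, h2⟩
      refine ⟨⟨n • f + a, h1, -(n : A), by simp only [nsmul_eq_mul]; ring⟩, ?_⟩
      rw [Set.mem_neg]
      exact ⟨n • f - a, h2, -(n : A), by simp only [nsmul_eq_mul]; ring⟩
    · rintro ⟨⟨m, hm, b, hab⟩, hneg⟩
      rw [Set.mem_neg] at hneg
      obtain ⟨m', hm', b', hab'⟩ := hneg
      obtain ⟨n, hn⟩ := harch (-b)
      obtain ⟨n', hn'⟩ := harch (-b')
      have hnat : ∀ k : ℕ, ((k : A)) ∈ S := by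
        intro k
        induction k with
        | zero => simpa using hS0
        | succ k ih => push_cast; exact hSadd _ ih _ hS1
      refine ⟨n + n', ?_, ?_⟩
      · have : (n + n') • f + a = m + (((n : A) - -b) + (n' : A)) * f := by
          rw [hab]; simp only [nsmul_eq_mul]; push_cast; ring
        rw [this]
        exact hMadd _ hm _ (hSM _ (hSadd _ hn _ (hnat n')) _ hf)
      · have : (n + n') • f - a = m' + (((n' : A) - -b') + (n : A)) * f := by
          have : a = -(m' + b' * f) := by rw [← hab']; ring
          rw [this]; simp only [nsmul_eq_mul]; push_cast; ring
        rw [this]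
        exact hMadd _ hm' _ (hSM _ (hSadd _ hn' _ (hnat n)) _ hf)
  · refine ⟨{ carrier := boundedBy M f,
              add_mem' := fun ha hb => hOadd _ ha _ hb,
              zero_mem' := hO0,
              smul_mem' := fun c a ha => by simpa [smul_eq_mul] using hOmul c a ha }, rfl⟩
end

section
/- Let $G$ be an abelian group, $M \subseteq G$ a subsemigroup with order unit $u$, and suppose $M$ satisfies: for all $a \in G$ and $n \in \mathbb{N}$, $na \in M$ implies $a \in M$. If $x \in G$ satisfies $\varphi(x) > 0$ for every pure state $\varphi$ of $(G, M, u)$, then $x$ is an order unit of $(G, M)$. -/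
/-- A monic state of `(G, M, u)`: an additive map `φ : G → ℝ` with `φ|_M ≥ 0` and
`φ(u) = 1`. -/
def IsMonicState {G : Type*} [AddCommGroup G] (M : Set G) (u : G) (φ : G →+ ℝ) : Prop :=
  (∀ m ∈ M, 0 ≤ φ m) ∧ φ u = 1

/-- A pure state of `(G, M, u)`: a monic state which is an extreme point of the convex
set of monic states, i.e. `φ₁ + φ₂ = 2φ` with monic states `φᵢ` forces `φ₁ = φ`. -/
def IsPureState {G : Type*} [AddCommGroup G] (M : Set G) (u : G) (φ : G →+ ℝ) : Prop :=
  IsMonicState M u φ ∧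
    ∀ φ₁ φ₂ : G →+ ℝ, IsMonicState M u φ₁ → IsMonicState M u φ₂ →
      φ₁ + φ₂ = 2 • φ → φ₁ = φ

/-- If `M` has order unit `u`, is divisible-saturated (`na ∈ M → a ∈ M`), and
`φ(x) > 0` for every pure state `φ` of `(G,M,u)`, then `x` is an order unit of `(G,M)`.
(Assuming the Goodearl–Handelman theorem, stated here as hypothesis `hGH`.) -/
theorem orderUnit_of_pos_on_pureStates {G : Type*} [AddCommGroup G] (M : Set G)
    (h0 : (0 : G) ∈ M) (hadd : ∀ x ∈ M, ∀ y ∈ M, x + y ∈ M)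
    (u : G) (hu : u ∈ M)
    (hord : ∀ x : G, ∃ m ∈ M, ∃ n : ℤ, x = m + n • u)
    (hdiv : ∀ a : G, ∀ n : ℕ, 0 < n → n • a ∈ M → a ∈ M)
    (hGH : ∀ y : G, (∀ φ : G →+ ℝ, IsPureState M u φ → 0 < φ y) →
      ∃ n : ℕ, 0 < n ∧ n • y ∈ M)
    (x : G) (hx : ∀ φ : G →+ ℝ, IsPureState M u φ → 0 < φ x) :
    x ∈ M ∧ ∀ y : G, ∃ m ∈ M, ∃ n : ℤ, y = m + n • x := by
  classical
  have hnsmul : ∀ (n : ℕ) (m : G), m ∈ M → n • m ∈ M := by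
    intro n m hm
    induction n with
    | zero => simpa using h0
    | succ k ih => rw [succ_nsmul]; exact hadd _ ih _ hm
  have hxM : x ∈ M := by
    obtain ⟨n, hn, hnx⟩ := hGH x hx
    exact hdiv x n hn hnx
  -- the set of (coercions of) monic states, as a subset of `G → ℝ`
  set K : Set (G → ℝ) :=
    {f | (∀ a b : G, f (a + b) = f a + f b) ∧ (∀ m ∈ M, 0 ≤ f m) ∧ f u = 1} with hKdef
  have hcoeK : ∀ φ : G →+ ℝ, IsMonicState M u φ → (⇑φ) ∈ K := by
    intro φ hφ
    exact ⟨fun a b => map_add φ a b, hφ.1, hφ.2⟩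
  have key : ∃ N : ℕ, N • x - u ∈ M := by
    by_cases hKne : K.Nonempty
    · -- K is closed
      have hKclosed : IsClosed K := by
        have h1 : IsClosed {f : G → ℝ | ∀ a b : G, f (a + b) = f a + f b} := by
          rw [Set.setOf_forall]
          refine isClosed_iInter fun a => ?_
          rw [Set.setOf_forall]
          refine isClosed_iInter fun b => ?_
          exact isClosed_eq (continuous_apply (a + b))
            ((continuous_apply a).add (continuous_apply b))
        have h2 : IsClosed {f : G → ℝ | ∀ m ∈ M, 0 ≤ f m} := by
          rw [Set.setOf_forall]
          refine isClosed_iInter fun m => ?_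
          rw [Set.setOf_forall]
          refine isClosed_iInter fun _ => ?_
          exact isClosed_le continuous_const (continuous_apply _)
        have h3 : IsClosed {f : G → ℝ | f u = 1} :=
          isClosed_eq (continuous_apply _) continuous_const
        have : K = {f : G → ℝ | ∀ a b : G, f (a + b) = f a + f b} ∩
            ({f : G → ℝ | ∀ m ∈ M, 0 ≤ f m} ∩ {f : G → ℝ | f u = 1}) := by
          ext f
          simp only [hKdef, Set.mem_setOf_eq, Set.mem_inter_iff]
        rw [this]
        exact h1.inter (h2.inter h3)
      -- K is pointwise bounded, hence compact
      have hbound : ∀ g : G, ∃ lb ub : ℝ, ∀ f ∈ K, f g ∈ Set.Icc lb ub := by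
        intro g
        obtain ⟨m, hm, n, hn⟩ := hord g
        obtain ⟨m', hm', n', hn'⟩ := hord (-g)
        refine ⟨(n : ℝ), (-n' : ℝ), fun f hf => ?_⟩
        obtain ⟨hfadd, hfM, hfu⟩ := hf
        set φ : G →+ ℝ := AddMonoidHom.mk' f hfadd with hφ
        have e1 : f g = f m + (n : ℝ) := by
          have : φ g = φ m + n • φ u := by rw [hn]; simp
          simpa [hφ, hfu] using this
        have e2 : f (-g) = f m' + (n' : ℝ) := by
          have : φ (-g) = φ m' + n' • φ u := by rw [hn']; simp
          simpa [hφ, hfu] using this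
        have e3 : f (-g) = -f g := map_neg φ g
        have p1 := hfM m hm
        have p2 := hfM m' hm'
        constructor
        · rw [e1]; linarith
        · rw [e3] at e2; linarith
      choose lb ub hlbub using hbound
      have hKcomp : IsCompact K := by
        refine IsCompact.of_isClosed_subset
          (isCompact_univ_pi (fun g => isCompact_Icc (a := lb g) (b := ub g))) hKclosed ?_
        intro f hf
        rw [Set.mem_univ_pi]
        exact fun g => hlbub g f hf
      -- minimum of evaluation at x
      obtain ⟨ψ₀, hψ₀K, hψ₀min⟩ := hKcomp.exists_isMinOn hKne (continuous_apply x).continuousOn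
      set ε : ℝ := ψ₀ x with hεdef
      have hmin : ∀ f ∈ K, ε ≤ f x := fun f hf => hψ₀min hf
      -- the minimizing face
      set F : Set (G → ℝ) := {f | f ∈ K ∧ f x = ε} with hFdef
      have hFclosed : IsClosed F := by
        have : F = K ∩ {f : G → ℝ | f x = ε} := rfl
        rw [this]
        exact hKclosed.inter (isClosed_eq (continuous_apply _) continuous_const)
      have hFcomp : IsCompact F := IsCompact.of_isClosed_subset hKcomp hFclosed fun f hf => hf.1
      obtain ⟨ψ, hψ⟩ := hFcomp.extremePoints_nonempty ⟨ψ₀, hψ₀K, rfl⟩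
      rw [mem_extremePoints] at hψ
      obtain ⟨⟨hψK, hψx⟩, hψext⟩ := hψ
      -- ψ is a pure state
      set φψ : G →+ ℝ := AddMonoidHom.mk' ψ hψK.1 with hφψ
      have hpure : IsPureState M u φψ := by
        refine ⟨⟨hψK.2.1, hψK.2.2⟩, ?_⟩
        intro φ₁ φ₂ hφ₁ hφ₂ heq
        have hfun : (⇑φ₁ : G → ℝ) + ⇑φ₂ = (2 : ℝ) • ψ := by
          ext g
          have := DFunLike.congr_fun heq g
          simpa [hφψ, two_smul, two_mul] using this
        have hK1 : (⇑φ₁ : G → ℝ) ∈ K := hcoeK φ₁ hφ₁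
        have hK2 : (⇑φ₂ : G → ℝ) ∈ K := hcoeK φ₂ hφ₂
        have hsum : φ₁ x + φ₂ x = 2 * ε := by
          have := congrFun hfun x
          simpa [hψx, two_mul] using this
        have h1 : φ₁ x = ε := le_antisymm (by have := hmin _ hK2; linarith) (hmin _ hK1)
        have h2 : φ₂ x = ε := by linarith [hmin _ hK1, hmin _ hK2]
        have hF1 : (⇑φ₁ : G → ℝ) ∈ F := ⟨hK1, h1⟩
        have hF2 : (⇑φ₂ : G → ℝ) ∈ F := ⟨hK2, h2⟩
        have hseg : ψ ∈ openSegment ℝ (⇑φ₁) (⇑φ₂) := by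
          refine ⟨1/2, 1/2, by norm_num, by norm_num, by norm_num, ?_⟩
          have : (⇑φ₁ : G → ℝ) + ⇑φ₂ = (2 : ℝ) • ψ := hfun
          ext g
          have := congrFun this g
          simp only [Pi.add_apply, Pi.smul_apply, smul_eq_mul] at this ⊢
          linarith
        have := hψext _ hF1 _ hF2 hseg
        exact DFunLike.coe_injective this.1
      have hε : 0 < ε := by
        have := hx φψ hpure
        simpa [hφψ, hψx] using this
      -- choose N with N * ε > 1
      obtain ⟨N, hN⟩ := exists_nat_gt (1 / ε)
      have hNε : 1 < (N : ℝ) * ε := (div_lt_iff₀ hε).mp hN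
      -- all pure states are positive on N • x - u
      have hpos : ∀ φ : G →+ ℝ, IsPureState M u φ → 0 < φ (N • x - u) := by
        intro φ hφ
        have hφK : (⇑φ : G → ℝ) ∈ K := hcoeK φ hφ.1
        have hφx : ε ≤ φ x := hmin _ hφK
        have : φ (N • x - u) = N * φ x - 1 := by
          rw [map_sub, map_nsmul, hφ.1.2, nsmul_eq_mul]
        rw [this]
        have : (N : ℝ) * ε ≤ N * φ x :=
          mul_le_mul_of_nonneg_left hφx (Nat.cast_nonneg N)
        linarith
      obtain ⟨k, hk, hkM⟩ := hGH (N • x - u) hpos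
      exact ⟨N, hdiv _ k hk hkM⟩
    · -- no states at all, hence no pure states: M is everything
      have hnone : ∀ φ : G →+ ℝ, ¬ IsPureState M u φ := fun φ hφ =>
        hKne ⟨⇑φ, hcoeK φ hφ.1⟩
      obtain ⟨k, hk, hkM⟩ := hGH (1 • x - u) (fun φ hφ => absurd hφ (hnone φ))
      exact ⟨1, hdiv _ k hk hkM⟩
  obtain ⟨N, hNM⟩ := key
  refine ⟨hxM, fun y => ?_⟩
  obtain ⟨m, hm, k, hk⟩ := hord y
  rcases le_or_gt 0 k with hk0 | hk0
  · refine ⟨y, ?_, 0, by simp⟩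
    have : y = m + k.toNat • u := by
      rw [hk, ← natCast_zsmul, Int.toNat_of_nonneg hk0]
    rw [this]
    exact hadd _ hm _ (hnsmul _ _ hu)
  · set j : ℕ := (-k).toNat with hj
    have hjk : (j : ℤ) = -k := Int.toNat_of_nonneg (by omega)
    refine ⟨m + j • (N • x - u), hadd _ hm _ (hnsmul _ _ hNM), k * N, ?_⟩
    have h1 : (j : ℤ) • (N • x - u) = j • (N • x - u) := natCast_zsmul _ _
    have h2 : ((N : ℤ)) • x = N • x := natCast_zsmul _ _
    rw [hk, ← h1, hjk, ← h2]
    module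
end

section
/- Let $G$ be an abelian group, $H \subseteq G$ a subgroup, and $M \subseteq G$ a subsemigroup. If $(G/H, \bar{M})$ has an order unit and $(H, M \cap H)$ has an order unit, then $(G, M)$ has an order unit. In fact, if $\bar{u}$ is an order unit of $(G/H, \bar M)$ with $u \in M$ and $v$ is an order unit of $(H, M \cap H)$, then $u + v$ is an order unit of $(G,M)$. -/
/-- If `(G/H, M̄)` has an order unit `ū` (`u ∈ M`) and `(H, M ∩ H)` has an order unit
`v`, then `u + v` is an order unit of `(G, M)`. -/
theorem orderUnit_of_quotient_and_subgroup {G : Type*} [AddCommGroup G]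
    (H : AddSubgroup G) (M : Set G)
    (h0 : (0 : G) ∈ M) (hadd : ∀ x ∈ M, ∀ y ∈ M, x + y ∈ M)
    (u : G) (hu : u ∈ M)
    (hordq : ∀ q : G ⧸ H, ∃ m ∈ M, ∃ n : ℤ,
      q = QuotientAddGroup.mk m + n • (QuotientAddGroup.mk u : G ⧸ H))
    (v : G) (hv : v ∈ M ∩ (H : Set G))
    (hordH : ∀ x ∈ H, ∃ m ∈ M ∩ (H : Set G), ∃ n : ℤ, x = m + n • v) :
    u + v ∈ M ∧ ∀ x : G, ∃ m ∈ M, ∃ n : ℤ, x = m + n • (u + v) := by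
  have hmul : ∀ (k : ℤ), 0 ≤ k → ∀ x ∈ M, k • x ∈ M := by
    intro k hk x hx
    lift k to ℕ using hk
    induction k with
    | zero => simpa using h0
    | succ n ih =>
      have h : ((n + 1 : ℕ) : ℤ) • x = ((n : ℕ) : ℤ) • x + x := by
        push_cast; rw [add_smul, one_smul]
      rw [h]; exact hadd _ ih _ hx
  refine ⟨hadd _ hu _ hv.1, fun x => ?_⟩
  obtain ⟨m, hm, n, hq⟩ := hordq (QuotientAddGroup.mk x)
  have hH : x - (m + n • u) ∈ H := by
    rw [← QuotientAddGroup.eq_iff_sub_mem]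
    rw [hq]
    simp [QuotientAddGroup.mk_add, QuotientAddGroup.mk_zsmul]
  obtain ⟨m', hm', k, hk⟩ := hordH _ hH
  set N := min n k with hN
  refine ⟨m + m' + (n - N) • u + (k - N) • v, ?_, N, ?_⟩
  · exact hadd _ (hadd _ (hadd _ hm _ hm'.1) _
      (hmul _ (by simp [hN]) _ hu)) _ (hmul _ (by simp [hN]) _ hv.1)
  · have hx : x = m + n • u + (m' + k • v) := by rw [← hk]; abel
    rw [hx, smul_add, sub_smul, sub_smul]
    abel
end

section
/- Let $A$ be a commutative ring, $S \subseteq A$ a subsemiring, $M \subseteq A$ an $S$-pseudomodule, and $I = (x_1, \ldots, x_n)$ an ideal of $A$. Suppose either (1) $(A, S)$ has an order unit $u$ and $x_1, \ldots, x_n \in M$, or (2) $(A, M)$ has an order unit $u$ and $x_1, \ldots, x_n \in S$. Then $v := u(x_1 + \cdots + x_n)$ is an order unit of $(I, M \cap I)$. -/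
/-- Auxiliary lemma unifying the two cases: `T` is a set containing `0`, closed
under addition, containing `u`, decomposing every element as `t + k • u`, and
such that `t * x i ∈ M` for all `t ∈ T`. -/
theorem orderUnit_of_ideal_aux {A : Type*} [CommRing A] (M T : Set A)
    (hM0 : (0 : A) ∈ M) (hMadd : ∀ x ∈ M, ∀ y ∈ M, x + y ∈ M)
    (hT0 : (0 : A) ∈ T) (hTadd : ∀ x ∈ T, ∀ y ∈ T, x + y ∈ T)
    (n : ℕ) (x : Fin n → A) (u : A) (hu : u ∈ T)
    (hdec : ∀ a : A, ∃ t ∈ T, ∃ k : ℤ, a = t + k • u)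
    (hmul : ∀ t ∈ T, ∀ i, t * x i ∈ M) :
    u * (∑ i, x i) ∈ M ∩ (Ideal.span (Set.range x) : Set A) ∧
    ∀ b ∈ Ideal.span (Set.range x),
      ∃ m ∈ M ∩ (Ideal.span (Set.range x) : Set A),
        ∃ k : ℤ, b = m + k • (u * ∑ i, x i) := by
  classical
  have hsum_mem : ∀ (f : Fin n → A), (∀ i, f i ∈ M) → ∑ i, f i ∈ M := by
    intro f hf
    exact Finset.sum_induction f (· ∈ M) (fun a b ha hb => hMadd a ha b hb) hM0
      (fun i _ => hf i)
  have hxI : ∀ i, x i ∈ Ideal.span (Set.range x) := fun i =>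
    Ideal.subset_span ⟨i, rfl⟩
  have hnsmul : ∀ k : ℤ, 0 ≤ k → k • u ∈ T := by
    intro k hk
    obtain ⟨p, rfl⟩ := Int.eq_ofNat_of_zero_le hk
    induction p with
    | zero => simpa using hT0
    | succ p ih =>
      have : ((p + 1 : ℕ) : ℤ) • u = (p : ℤ) • u + u := by
        push_cast
        rw [add_smul, one_smul]
      rw [this]
      exact hTadd _ (ih (by positivity)) _ hu
  have hvM : u * (∑ i, x i) ∈ M := by
    rw [Finset.mul_sum]
    exact hsum_mem _ fun i => hmul u hu i
  have hvI : u * (∑ i, x i) ∈ Ideal.span (Set.range x) :=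
    Ideal.mul_mem_left _ u (Ideal.sum_mem _ fun i _ => hxI i)
  refine ⟨⟨hvM, hvI⟩, ?_⟩
  intro b hb
  rw [show Ideal.span (Set.range x) = Submodule.span A (Set.range x) from rfl,
    Submodule.mem_span_range_iff_exists_fun] at hb
  obtain ⟨c, hc⟩ := hb
  choose t ht k hk using fun i => hdec (c i)
  set K : ℤ := -(∑ i, |k i|) with hK
  have hKle : ∀ i, 0 ≤ k i - K := by
    intro i
    have h1 : |k i| ≤ ∑ j, |k j| :=
      Finset.single_le_sum (f := fun j => |k j|) (fun j _ => abs_nonneg _)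
        (Finset.mem_univ i)
    have h2 := neg_abs_le (k i)
    simp only [hK]
    linarith
  refine ⟨∑ i, (c i - K • u) * x i, ⟨?_, ?_⟩, K, ?_⟩
  · refine hsum_mem _ fun i => ?_
    have : c i - K • u = t i + (k i - K) • u := by
      rw [hk i, sub_smul]; ring
    rw [this]
    exact hmul _ (hTadd _ (ht i) _ (hnsmul _ (hKle i))) i
  · exact Ideal.sum_mem _ fun i _ => Ideal.mul_mem_left _ _ (hxI i)
  · have h1 : K • (u * ∑ i, x i) = ∑ i, (K • u) * x i := by
      rw [← smul_mul_assoc, Finset.mul_sum]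
    rw [h1, ← Finset.sum_add_distrib, ← hc]
    refine Finset.sum_congr rfl fun i _ => ?_
    rw [smul_eq_mul]
    ring

/-- Let `S` be a subsemiring of `A`, `M` an `S`-pseudomodule and
`I = (x₁, …, xₙ)` an ideal. If either (1) `(A,S)` has an order unit `u` and all
`xᵢ ∈ M`, or (2) `(A,M)` has an order unit `u` and all `xᵢ ∈ S`, then
`v = u(x₁ + ⋯ + xₙ)` is an order unit of `(I, M ∩ I)`. -/
theorem orderUnit_of_ideal {A : Type*} [CommRing A] (S M : Set A)
    (hS0 : (0 : A) ∈ S) (hS1 : (1 : A) ∈ S)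
    (hSadd : ∀ x ∈ S, ∀ y ∈ S, x + y ∈ S)
    (hSmul : ∀ x ∈ S, ∀ y ∈ S, x * y ∈ S)
    (hM0 : (0 : A) ∈ M) (hMadd : ∀ x ∈ M, ∀ y ∈ M, x + y ∈ M)
    (hSM : ∀ s ∈ S, ∀ m ∈ M, s * m ∈ M)
    (n : ℕ) (x : Fin n → A) (u : A)
    (hcase :
      (u ∈ S ∧ (∀ a : A, ∃ s ∈ S, ∃ k : ℤ, a = s + k • u) ∧ ∀ i, x i ∈ M) ∨
      (u ∈ M ∧ (∀ a : A, ∃ m ∈ M, ∃ k : ℤ, a = m + k • u) ∧ ∀ i, x i ∈ S)) :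
    u * (∑ i, x i) ∈ M ∩ (Ideal.span (Set.range x) : Set A) ∧
    ∀ b ∈ Ideal.span (Set.range x),
      ∃ m ∈ M ∩ (Ideal.span (Set.range x) : Set A),
        ∃ k : ℤ, b = m + k • (u * ∑ i, x i) := by
  rcases hcase with ⟨hu, hdec, hx⟩ | ⟨hu, hdec, hx⟩
  · exact orderUnit_of_ideal_aux M S hM0 hMadd hS0 hSadd n x u hu hdec
      (fun t htS i => hSM t htS _ (hx i))
  · exact orderUnit_of_ideal_aux M M hM0 hMadd hM0 hMadd n x u hu hdec
      (fun t htM i => mul_comm t (x i) ▸ hSM _ (hx i) t htM)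
end

section
/- Let $A$ be a commutative ring with $1/2 \in A$, $M \subseteq A$ an archimedean quadratic module, and $I$ a finitely generated ideal of $A$. Then $(I^2, M \cap I^2)$ has an order unit. More precisely, if $I = (b_1, \ldots, b_m)$, then $u = b_1^2 + \cdots + b_m^2$ is an order unit of $(I^2, M \cap I^2)$. -/
/-!
Write `u = ∑ bᵢ²`. Every `u - bᵢ²` is a sum of squares, hence lies in `M`. Since `I²` is additively
generated by the elements `a bᵢ bⱼ`, it suffices to bound each of these below by a multiple of `-u`.
Since `M` is archimedean there is `N` with `N ± a ∈ M`, and then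
`4 (a bᵢ bⱼ + N u) = (bᵢ + bⱼ)² (N + a) + (bᵢ - bⱼ)² (N - a) + 2N (u - bᵢ²) + 2N (u - bⱼ²) ∈ M`;
multiplying by `half²` removes the factor `4`.
-/

open Set

def AddSubmonoid.lowerBoundedBy {A : Type*} [AddCommMonoid A] (M : AddSubmonoid A) (u : A) :
    AddSubmonoid A where
  carrier := {x | ∃ n : ℕ, x + n • u ∈ M}
  add_mem' := by
    rintro x y ⟨n, hn⟩ ⟨k, hk⟩
    exact ⟨n + k, by convert add_mem hn hk using 1; rw [add_nsmul]; abel⟩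
  zero_mem' := ⟨0, by simp⟩

section

variable {A : Type*} [CommRing A]

theorem mem_of_forall_mul_mem_of_mem_span_range_sq {ι : Type*} [Fintype ι] {b : ι → A}
    {L : AddSubmonoid A} (h : ∀ a i j, a * (b i * b j) ∈ L) {x : A}
    (hx : x ∈ Ideal.span (range b) ^ 2) : x ∈ L := by
  rw [pow_two, Ideal.span_mul_span', ← image2_mul, image2_range,
    Ideal.mem_span_range_iff_exists_fun] at hx
  obtain ⟨c, rfl⟩ := hx
  exact sum_mem fun p _ => h (c p) p.1 p.2

namespace QuadraticModule

variable {M : AddSubmonoid A}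

theorem sq_mem (hM1 : (1 : A) ∈ M) (hsq : ∀ a : A, ∀ m ∈ M, a ^ 2 * m ∈ M) (a : A) :
    a ^ 2 ∈ M := by
  simpa using hsq a 1 hM1

theorem sum_sq_sub_sq_mem (hM1 : (1 : A) ∈ M) (hsq : ∀ a : A, ∀ m ∈ M, a ^ 2 * m ∈ M)
    {ι : Type*} [Fintype ι] (b : ι → A) (i : ι) : ∑ j, b j ^ 2 - b i ^ 2 ∈ M := by
  classical
  rw [← Finset.sum_erase_eq_sub (Finset.mem_univ i)]
  exact sum_mem fun j _ => sq_mem hM1 hsq (b j)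

theorem exists_natCast_sub_mem_and_add_mem (hM1 : (1 : A) ∈ M)
    (harch : ∀ a : A, ∃ n : ℕ, (n : A) - a ∈ M) (a : A) :
    ∃ N : ℕ, (N : A) - a ∈ M ∧ (N : A) + a ∈ M := by
  obtain ⟨n, hn⟩ := harch a
  obtain ⟨k, hk⟩ := harch (-a)
  have natCast_mem (l : ℕ) : (l : A) ∈ M := by simpa using nsmul_mem hM1 l
  refine ⟨n + k, ?_, ?_⟩
  · convert add_mem hn (natCast_mem k) using 1; push_cast; ring
  · convert add_mem hk (natCast_mem n) using 1; push_cast; ring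

theorem mem_of_four_mul_mem (hsq : ∀ a : A, ∀ m ∈ M, a ^ 2 * m ∈ M) {half : A}
    (hhalf : 2 * half = 1) {y : A} (hy : 4 * y ∈ M) : y ∈ M := by
  convert hsq half _ hy using 1
  linear_combination (-(2 * half + 1) * y) * hhalf

theorem four_mul_mul_add_nsmul_mem (hsq : ∀ a : A, ∀ m ∈ M, a ^ 2 * m ∈ M) {a b c u : A}
    {N : ℕ} (hsub : (N : A) - a ∈ M) (hadd : (N : A) + a ∈ M) (hb : u - b ^ 2 ∈ M)
    (hc : u - c ^ 2 ∈ M) : 4 * (a * (b * c) + N • u) ∈ M := by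
  have := add_mem (add_mem (hsq (b + c) _ hadd) (hsq (b - c) _ hsub))
    (add_mem (nsmul_mem hb (2 * N)) (nsmul_mem hc (2 * N)))
  convert this using 1
  simp only [nsmul_eq_mul]
  push_cast
  ring

theorem mem_lowerBoundedBy_sum_sq (hM1 : (1 : A) ∈ M)
    (hsq : ∀ a : A, ∀ m ∈ M, a ^ 2 * m ∈ M) (harch : ∀ a : A, ∃ n : ℕ, (n : A) - a ∈ M)
    {half : A} (hhalf : 2 * half = 1) {ι : Type*} [Fintype ι] (b : ι → A) {x : A}
    (hx : x ∈ Ideal.span (range b) ^ 2) : x ∈ M.lowerBoundedBy (∑ i, b i ^ 2) := by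
  refine mem_of_forall_mul_mem_of_mem_span_range_sq (fun a i j => ?_) hx
  obtain ⟨N, hsub, hadd⟩ := exists_natCast_sub_mem_and_add_mem hM1 harch a
  exact ⟨N, mem_of_four_mul_mem hsq hhalf <| four_mul_mul_add_nsmul_mem hsq hsub hadd
    (sum_sq_sub_sq_mem hM1 hsq b i) (sum_sq_sub_sq_mem hM1 hsq b j)⟩

end QuadraticModule

end

/-- If `1/2 ∈ A`, `M` is an archimedean quadratic module in `A` and
`I = (b₁, …, b_m)` is a finitely generated ideal, then `(I², M ∩ I²)` has an order
unit; more precisely `u = b₁² + ⋯ + b_m²` is such an order unit. -/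
theorem orderUnit_sq_ideal {A : Type*} [CommRing A]
    (half : A) (hhalf : 2 * half = 1) (M : Set A)
    (hM0 : (0 : A) ∈ M) (hM1 : (1 : A) ∈ M)
    (hMadd : ∀ x ∈ M, ∀ y ∈ M, x + y ∈ M)
    (hsq : ∀ a : A, ∀ m ∈ M, a ^ 2 * m ∈ M)
    (harch : ∀ a : A, ∃ n : ℕ, (n : A) - a ∈ M)
    (m : ℕ) (b : Fin m → A) :
    (∑ i, b i ^ 2) ∈ M ∩ ((Ideal.span (Set.range b)) ^ 2 : Ideal A) ∧
    ∀ x ∈ (Ideal.span (Set.range b)) ^ 2,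
      ∃ y ∈ M ∩ ((Ideal.span (Set.range b)) ^ 2 : Ideal A),
        ∃ k : ℤ, x = y + k • (∑ i, b i ^ 2) := by
  let M' : AddSubmonoid A :=
    { carrier := M, add_mem' := fun hx hy => hMadd _ hx _ hy, zero_mem' := hM0 }
  have hu : ∑ i, b i ^ 2 ∈ Ideal.span (range b) ^ 2 :=
    sum_mem fun i _ => Ideal.pow_mem_pow (Ideal.subset_span (mem_range_self i)) 2
  refine ⟨⟨sum_mem (S := M') fun i _ => QuadraticModule.sq_mem hM1 hsq (b i), hu⟩,
    fun x hx => ?_⟩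
  obtain ⟨n, hn⟩ :=
    QuadraticModule.mem_lowerBoundedBy_sum_sq (M := M') hM1 hsq harch hhalf b hx
  exact ⟨x + n • (∑ i, b i ^ 2), ⟨hn, add_mem hx (nsmul_mem hu n)⟩, -(n : ℤ), by simp⟩
end

section
/- Let $A$ be a commutative ring, $I \subseteq A$ an ideal, $u \in I$, $k$ a field, and $\varphi: I \to k$ an additive map with $\varphi(u) = 1$. Then $\varphi(ab) = \varphi(au)\varphi(b)$ for all $a \in A, b \in I$ if and only if there exists a ring homomorphism $\phi: A \to k$ such that $\varphi(ab) = \phi(a)\varphi(b)$ for all $a \in A, b \in I$. Moreover, such $\phi$ is unique and satisfies $\phi(a) = \varphi(au)$. -/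
/-- Let `I ⊆ A` be an ideal, `u ∈ I`, `k` a field, and `φ : I → k` additive with
`φ(u) = 1`. Then `φ(ab) = φ(au)φ(b)` for all `a ∈ A`, `b ∈ I` iff there is a ring
homomorphism `ϕ : A → k` with `φ(ab) = ϕ(a)φ(b)` for all `a ∈ A`, `b ∈ I`; moreover
such `ϕ` is unique and satisfies `ϕ(a) = φ(au)`. -/
theorem multiplicative_law_iff_ringHom {A : Type*} [CommRing A] {k : Type*} [Field k]
    (I : Ideal A) (u : A) (hu : u ∈ I) (φ : I →+ k) (hφu : φ ⟨u, hu⟩ = 1) :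
    ((∀ (a : A) (b : I), φ (a • b) = φ ⟨a * u, I.mul_mem_left a hu⟩ * φ b) ↔
      (∃ ϕ : A →+* k, ∀ (a : A) (b : I), φ (a • b) = ϕ a * φ b)) ∧
    ∀ ϕ : A →+* k, (∀ (a : A) (b : I), φ (a • b) = ϕ a * φ b) →
      ∀ a : A, ϕ a = φ ⟨a * u, I.mul_mem_left a hu⟩ := by
  have key : ∀ ϕ : A →+* k, (∀ (a : A) (b : I), φ (a • b) = ϕ a * φ b) →
      ∀ a : A, ϕ a = φ ⟨a * u, I.mul_mem_left a hu⟩ := by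
    intro ϕ hϕ a
    have := hϕ a ⟨u, hu⟩
    rw [hφu, mul_one] at this
    rw [← this]
    congr 1
  refine ⟨⟨fun h => ?_, fun ⟨ϕ, hϕ⟩ a b => by rw [hϕ a b, key ϕ hϕ a]⟩, key⟩
  refine ⟨{ toFun := fun a => φ ⟨a * u, I.mul_mem_left a hu⟩,
            map_one' := by simpa using hφu,
            map_mul' := by
              intro a b
              have := h a ⟨b * u, I.mul_mem_left b hu⟩
              rw [← this]
              congr 1
              ext
              simp [mul_assoc],
            map_zero' := by
              show φ ⟨0 * u, _⟩ = 0
              rw [show ((⟨0 * u, I.mul_mem_left 0 hu⟩ : I)) = 0 from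
                Subtype.ext (zero_mul u)]
              exact φ.map_zero,
            map_add' := by
              intro a b
              rw [← φ.map_add]
              congr 1
              ext
              simp [add_mul] }, fun a b => h a b⟩
end

section
/- Let $A$ be a commutative ring, $I \subseteq A$ an ideal, $u \in I$, $k$ a field, and $\varphi: I \to k$ an additive map with $\varphi(u) = 1$ satisfying $\varphi(ab) = \varphi(au)\varphi(b)$ for all $a \in A, b \in I$. Let $\phi: A \to k$, $\phi(a) = \varphi(au)$, be the associated ring homomorphism. Then exactly one of the following holds: (1) $\phi(u) \neq 0$ and $\varphi(b) = \phi(b)/\phi(u)$ for all $b \in I$; (2) $\phi(I) = 0$. Moreover, case (1) holds iff $\varphi(u^2) \neq 0$. -/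
/-- Dichotomy for the associated ring homomorphism `ϕ(a) = φ(au)`: exactly one of
(1) `ϕ(u) ≠ 0` and `φ(b) = ϕ(b)/ϕ(u)` for all `b ∈ I`, or (2) `ϕ(I) = 0` holds;
and case (1) holds iff `φ(u²) ≠ 0`. -/
theorem multiplicative_state_dichotomy {A : Type*} [CommRing A] {k : Type*} [Field k]
    (I : Ideal A) (u : A) (hu : u ∈ I) (φ : I →+ k) (hφu : φ ⟨u, hu⟩ = 1)
    (hmul : ∀ (a : A) (b : I), φ (a • b) = φ ⟨a * u, I.mul_mem_left a hu⟩ * φ b) :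
    Xor'
      (φ ⟨u * u, I.mul_mem_left u hu⟩ ≠ 0 ∧
        ∀ b : I, φ b = φ ⟨(b : A) * u, I.mul_mem_left _ hu⟩ /
          φ ⟨u * u, I.mul_mem_left u hu⟩)
      (∀ b : I, φ ⟨(b : A) * u, I.mul_mem_left _ hu⟩ = 0) ∧
    ((φ ⟨u * u, I.mul_mem_left u hu⟩ ≠ 0 ∧
        ∀ b : I, φ b = φ ⟨(b : A) * u, I.mul_mem_left _ hu⟩ /
          φ ⟨u * u, I.mul_mem_left u hu⟩) ↔
      φ ⟨u * u, I.mul_mem_left u hu⟩ ≠ 0) := by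
  set c := φ ⟨u * u, I.mul_mem_left u hu⟩ with hc
  have key : ∀ b : I, φ ⟨(b : A) * u, I.mul_mem_left _ hu⟩ = c * φ b := by
    intro b
    have h := hmul u b
    have he : (⟨(b : A) * u, I.mul_mem_left _ hu⟩ : I) = u • b := by
      ext; simp [mul_comm]
    rw [he, h]
  by_cases hc0 : c = 0
  · have h2 : ∀ b : I, φ ⟨(b : A) * u, I.mul_mem_left _ hu⟩ = 0 := by
      intro b; rw [key b, hc0, zero_mul]
    refine ⟨Or.inr ⟨h2, fun h => h.1 hc0⟩, ?_⟩
    constructor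
    · exact fun h => h.1
    · intro h; exact absurd hc0 h
  · have h1 : ∀ b : I, φ b = φ ⟨(b : A) * u, I.mul_mem_left _ hu⟩ / c := by
      intro b; rw [key b, mul_div_cancel_left₀ _ hc0]
    refine ⟨Or.inl ⟨⟨hc0, h1⟩, ?_⟩, ?_⟩
    · intro h2
      have := h2 ⟨u, hu⟩
      exact hc0 this
    · exact ⟨fun h => h.1, fun h => ⟨h, h1⟩⟩
end

section
/- Let $A$ be a commutative ring, $I \subseteq A$ an ideal, $S \subseteq A$ an archimedean subsemiring (i.e., $A = \mathbb{Z} + S$), and $M \subseteq I$ an $S$-pseudomodule such that $(I, M)$ has an order unit $u$. Then every pure state $\varphi$ of $(I, M, u)$ satisfies $\varphi(ab) = \varphi(au) \cdot \varphi(b)$ for all $a \in A$ and $b \in I$. -/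
/-! For `s ∈ S` pick `n` with `n - s ∈ S`. Then `x ↦ φ (s • x)` and `x ↦ φ ((n - s) • x)` are
positive functionals adding up to `n • φ`. Normalised, they are monic states with `φ` in the open
segment between them, so extremality of `φ` forces `φ (s • x) = φ (s • u) * φ x`. A general `a` is
`n - s` with `s ∈ S`, and both sides of the identity are additive in `a`. -/

section Convex

variable {𝕜 E : Type*} [Field 𝕜] [LinearOrder 𝕜] [IsStrictOrderedRing 𝕜] [AddCommGroup E]
  [Module 𝕜 E]

/-- If `x = a • y + b • z` with `a, b > 0`, then `x ± c • (y - z)` with `c = min a b` are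
convex combinations of `y` and `z` with sum `2 • x`. -/
theorem Convex.mem_extremePoints_of_add_eq_two_nsmul {A : Set E} (hA : Convex 𝕜 A) {x : E}
    (hx : x ∈ A) (h : ∀ y ∈ A, ∀ z ∈ A, y + z = 2 • x → y = x) : x ∈ A.extremePoints 𝕜 := by
  refine ⟨hx, fun y hy z hz ⟨a, b, ha, hb, hab, hxyz⟩ ↦ ?_⟩
  set c := min a b
  have hc : 0 < c := lt_min ha hb
  have hca : c ≤ a := min_le_left a b
  have hcb : c ≤ b := min_le_right a b
  have hplus : (a + c) • y + (b - c) • z ∈ A :=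
    hA hy hz (by linarith) (by linarith) (by linarith)
  have hminus : (a - c) • y + (b + c) • z ∈ A :=
    hA hy hz (by linarith) (by linarith) (by linarith)
  have hsum : (a + c) • y + (b - c) • z + ((a - c) • y + (b + c) • z) = 2 • x := by
    rw [← hxyz, two_nsmul]; module
  have hyz : y = z := by
    have := h _ hplus _ hminus hsum
    rw [← hxyz] at this
    refine smul_right_injective E hc.ne' (sub_eq_zero.mp ?_)
    rw [← sub_eq_zero] at this
    linear_combination (norm := module) this
  rw [← hxyz, ← hyz, ← add_smul, hab, one_smul]

end Convex

section States

variable {G : Type*} [AddCommGroup G]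

def monicStates (P : Set G) (e : G) : Set (G →+ ℝ) :=
  {φ | (∀ x ∈ P, 0 ≤ φ x) ∧ φ e = 1}

def IsOrderUnit (P : Set G) (e : G) : Prop :=
  e ∈ P ∧ ∀ x, ∃ p ∈ P, ∃ n : ℤ, x = p + n • e

variable {P : Set G} {e : G}

theorem convex_monicStates : Convex ℝ (monicStates P e) := by
  rintro φ ⟨hφP, hφe⟩ ψ ⟨hψP, hψe⟩ a b ha hb hab
  refine ⟨fun x hx ↦ ?_, ?_⟩
  · simp only [AddMonoidHom.add_apply, AddMonoidHom.smul_apply, smul_eq_mul]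
    exact add_nonneg (mul_nonneg ha (hφP x hx)) (mul_nonneg hb (hψP x hx))
  · simp [hφe, hψe, hab]

theorem inv_smul_mem_monicStates {ψ : G →+ ℝ} (hψ : ∀ x ∈ P, 0 ≤ ψ x) (he : 0 < ψ e) :
    (ψ e)⁻¹ • ψ ∈ monicStates P e :=
  ⟨fun x hx ↦ mul_nonneg (inv_nonneg.mpr he.le) (hψ x hx), inv_mul_cancel₀ he.ne'⟩

theorem IsOrderUnit.eq_zero_of_nonneg (he : IsOrderUnit P e) {ψ : G →+ ℝ}
    (hψ : ∀ x ∈ P, 0 ≤ ψ x) (hψe : ψ e = 0) : ψ = 0 := by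
  have hnonneg (x : G) : 0 ≤ ψ x := by
    obtain ⟨p, hp, n, rfl⟩ := he.2 x
    simpa [hψe] using hψ p hp
  ext x
  exact le_antisymm (by simpa using hnonneg (-x)) (hnonneg x)

theorem IsOrderUnit.eq_smul_of_add_eq_smul (he : IsOrderUnit P e) {φ : G →+ ℝ}
    (hφ : φ ∈ (monicStates P e).extremePoints ℝ) {ψ χ : G →+ ℝ} (hψ : ∀ x ∈ P, 0 ≤ ψ x)
    (hχ : ∀ x ∈ P, 0 ≤ χ x) {c : ℝ} (hsum : ψ + χ = c • φ) : ψ = ψ e • φ := by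
  have hc : ψ e + χ e = c := by
    simpa [hφ.1.2] using DFunLike.congr_fun hsum e
  rcases (hψ e he.1).eq_or_lt with hψe | hψe
  · rw [he.eq_zero_of_nonneg hψ hψe.symm]
    simp
  rcases (hχ e he.1).eq_or_lt with hχe | hχe
  · rwa [he.eq_zero_of_nonneg hχ hχe.symm, add_zero, ← hc, ← hχe, add_zero] at hsum
  have hc0 : 0 < c := hc ▸ add_pos hψe hχe
  have hseg : φ ∈ openSegment ℝ ((ψ e)⁻¹ • ψ) ((χ e)⁻¹ • χ) := by
    refine ⟨ψ e / c, χ e / c, div_pos hψe hc0, div_pos hχe hc0,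
      by rw [← add_div, hc, div_self hc0.ne'], ?_⟩
    ext x
    have hx := DFunLike.congr_fun hsum x
    simp only [AddMonoidHom.add_apply, AddMonoidHom.smul_apply, smul_eq_mul] at hx ⊢
    field_simp
    linarith
  have := hφ.2 (inv_smul_mem_monicStates hψ hψe) (inv_smul_mem_monicStates hχ hχe) hseg
  rw [← this, smul_smul, mul_inv_cancel₀ hψe.ne', one_smul]

end States

section Module

variable {A G : Type*} [Ring A] [AddCommGroup G] [Module A G] {P : Set G} {e : G}
  {φ : G →+ ℝ}

theorem IsOrderUnit.map_smul_eq_mul_of_smul_mem (he : IsOrderUnit P e)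
    (hφ : φ ∈ (monicStates P e).extremePoints ℝ) {s : A} {n : ℕ} (hs : ∀ x ∈ P, s • x ∈ P)
    (hns : ∀ x ∈ P, ((n : A) - s) • x ∈ P) (b : G) : φ (s • b) = φ (s • e) * φ b := by
  set ψ := φ.comp (DistribSMul.toAddMonoidHom G s)
  set χ := φ.comp (DistribSMul.toAddMonoidHom G ((n : A) - s))
  have hsum : ψ + χ = (n : ℝ) • φ := by
    ext x
    simp [ψ, χ, ← map_add, ← add_smul, Nat.cast_smul_eq_nsmul]
  exact DFunLike.congr_fun (he.eq_smul_of_add_eq_smul hφ (fun x hx ↦ hφ.1.1 (s • x) (hs x hx))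
    (fun x hx ↦ hφ.1.1 (((n : A) - s) • x) (hns x hx)) hsum) b

theorem IsOrderUnit.map_smul_eq_mul (he : IsOrderUnit P e)
    (hφ : φ ∈ (monicStates P e).extremePoints ℝ) {S : Set A} (hSP : ∀ s ∈ S, ∀ x ∈ P, s • x ∈ P)
    (harch : ∀ a : A, ∃ n : ℕ, (n : A) - a ∈ S) (a : A) (b : G) :
    φ (a • b) = φ (a • e) * φ b := by
  have hmul_of_mem (s : A) (hs : s ∈ S) (x : G) : φ (s • x) = φ (s • e) * φ x := by
    obtain ⟨n, hn⟩ := harch s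
    exact he.map_smul_eq_mul_of_smul_mem hφ (hSP s hs) (hSP _ hn) x
  obtain ⟨n, hn⟩ := harch a
  obtain ⟨s, hs, rfl⟩ : ∃ s ∈ S, a = n - s := ⟨_, hn, (sub_sub_cancel _ _).symm⟩
  rw [sub_smul, sub_smul, map_sub, map_sub, map_natCast_smul φ A ℝ, map_natCast_smul φ A ℝ,
    hmul_of_mem s hs, hφ.1.2, smul_eq_mul, smul_eq_mul]
  ring

end Module

theorem pureState_multiplicative_of_archimedean_general {A : Type*} [CommRing A]
    (I : Ideal A) (S M : Set A)
    (harch : ∀ a : A, ∃ n : ℕ, (n : A) - a ∈ S)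
    (hMI : M ⊆ (I : Set A))
    (hSM : ∀ s ∈ S, ∀ m ∈ M, s * m ∈ M)
    (u : A) (hu : u ∈ M)
    (hord : ∀ x ∈ I, ∃ m ∈ M, ∃ n : ℤ, x = m + n • u)
    (φ : I →+ ℝ)
    (hstate : ∀ x : I, (x : A) ∈ M → 0 ≤ φ x)
    (hmonic : φ ⟨u, hMI hu⟩ = 1)
    (hpure : ∀ φ₁ φ₂ : I →+ ℝ,
      ((∀ x : I, (x : A) ∈ M → 0 ≤ φ₁ x) ∧ φ₁ ⟨u, hMI hu⟩ = 1) →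
      ((∀ x : I, (x : A) ∈ M → 0 ≤ φ₂ x) ∧ φ₂ ⟨u, hMI hu⟩ = 1) →
      φ₁ + φ₂ = 2 • φ → φ₁ = φ) :
    ∀ (a : A) (b : I), φ (a • b) = φ ⟨a * u, I.mul_mem_left a (hMI hu)⟩ * φ b := by
  have he : IsOrderUnit (Subtype.val ⁻¹' M : Set I) ⟨u, hMI hu⟩ := by
    refine ⟨hu, fun x ↦ ?_⟩
    obtain ⟨m, hm, n, hx⟩ := hord x x.2
    exact ⟨⟨m, hMI hm⟩, hm, n, Subtype.ext hx⟩
  have hφ : φ ∈ (monicStates (Subtype.val ⁻¹' M : Set I) ⟨u, hMI hu⟩).extremePoints ℝ :=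
    convex_monicStates.mem_extremePoints_of_add_eq_two_nsmul ⟨hstate, hmonic⟩
      fun φ₁ h₁ φ₂ h₂ ↦ hpure φ₁ φ₂ h₁ h₂
  exact he.map_smul_eq_mul hφ (fun s hs x hx ↦ hSM s hs x hx) harch

/-- Pure states on ideals over archimedean semirings are multiplicative:
if `S ⊆ A` is an archimedean subsemiring, `M ⊆ I` an `S`-pseudomodule with order
unit `u` of `(I,M)`, then every pure state `φ` of `(I,M,u)` satisfies
`φ(ab) = φ(au)·φ(b)` for all `a ∈ A`, `b ∈ I`. -/
theorem pureState_multiplicative_of_archimedean {A : Type*} [CommRing A]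
    (I : Ideal A) (S M : Set A)
    (hS0 : (0 : A) ∈ S) (hS1 : (1 : A) ∈ S)
    (hSadd : ∀ x ∈ S, ∀ y ∈ S, x + y ∈ S)
    (hSmul : ∀ x ∈ S, ∀ y ∈ S, x * y ∈ S)
    (harch : ∀ a : A, ∃ n : ℕ, (n : A) - a ∈ S)
    (hMI : M ⊆ (I : Set A))
    (hM0 : (0 : A) ∈ M) (hMadd : ∀ x ∈ M, ∀ y ∈ M, x + y ∈ M)
    (hSM : ∀ s ∈ S, ∀ m ∈ M, s * m ∈ M)
    (u : A) (hu : u ∈ M)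
    (hord : ∀ x ∈ I, ∃ m ∈ M, ∃ n : ℤ, x = m + n • u)
    (φ : I →+ ℝ)
    (hstate : ∀ x : I, (x : A) ∈ M → 0 ≤ φ x)
    (hmonic : φ ⟨u, hMI hu⟩ = 1)
    (hpure : ∀ φ₁ φ₂ : I →+ ℝ,
      ((∀ x : I, (x : A) ∈ M → 0 ≤ φ₁ x) ∧ φ₁ ⟨u, hMI hu⟩ = 1) →
      ((∀ x : I, (x : A) ∈ M → 0 ≤ φ₂ x) ∧ φ₂ ⟨u, hMI hu⟩ = 1) →
      φ₁ + φ₂ = 2 • φ → φ₁ = φ) :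
    ∀ (a : A) (b : I), φ (a • b) = φ ⟨a * u, I.mul_mem_left a (hMI hu)⟩ * φ b :=
  pureState_multiplicative_of_archimedean_general I S M harch hMI hSM u hu hord φ hstate hmonic
    hpure
end

section
/- Let $A$ be a commutative ring with $1/2 \in A$, $I \subseteq A$ an ideal, $M \subseteq I$ a quadratic pseudomodule with order unit $u$ of $(I,M)$, and $a \in A$ with $aM \subseteq M$ and $(1-2a)u \in M$. Then every state $\varphi$ of $(I, M)$ satisfies $\varphi((1-a)x) \geq 0$ for all $x \in M$. -/
/-- Let `1/2 ∈ A`, `I ⊆ A` an ideal, `M ⊆ I` a quadratic pseudomodule with order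
unit `u` of `(I,M)`, and `a ∈ A` with `aM ⊆ M` and `(1-2a)u ∈ M`. Then every state
`φ` of `(I,M)` satisfies `φ((1-a)x) ≥ 0` for all `x ∈ M`. -/
theorem state_nonneg_one_sub {A : Type*} [CommRing A]
    (half : A) (hhalf : 2 * half = 1)
    (I : Ideal A) (M : Set A) (hMI : M ⊆ (I : Set A))
    (hM0 : (0 : A) ∈ M) (hMadd : ∀ x ∈ M, ∀ y ∈ M, x + y ∈ M)
    (hsq : ∀ c : A, ∀ m ∈ M, c ^ 2 * m ∈ M)
    (u : A) (hu : u ∈ M)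
    (hord : ∀ x ∈ I, ∃ m ∈ M, ∃ n : ℤ, x = m + n • u)
    (a : A) (haM : ∀ m ∈ M, a * m ∈ M) (hau : (1 - 2 * a) * u ∈ M)
    (φ : I →+ ℝ) (hstate : ∀ x : I, (x : A) ∈ M → 0 ≤ φ x) :
    ∀ x : A, ∀ hx : x ∈ M, 0 ≤ φ ⟨(1 - a) * x, I.mul_mem_left (1 - a) (hMI hx)⟩ := by
  intro x hx
  classical
  -- a total version of φ
  set Φ : A → ℝ := fun y => if h : y ∈ I then φ ⟨y, h⟩ else 0 with hΦ
  have Φdef : ∀ (y : A) (h : y ∈ I), Φ y = φ ⟨y, h⟩ := by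
    intro y h; simp only [hΦ, dif_pos h]
  have Φnn : ∀ m ∈ M, 0 ≤ Φ m := by
    intro m hm
    rw [Φdef m (hMI hm)]
    exact hstate _ hm
  have Φadd : ∀ y ∈ I, ∀ z ∈ I, Φ (y + z) = Φ y + Φ z := by
    intro y hy z hz
    rw [Φdef y hy, Φdef z hz, Φdef (y + z) (I.add_mem hy hz), ← map_add]
    rfl
  have Φsmul : ∀ (n : ℤ), ∀ y ∈ I, Φ (n • y) = n * Φ y := by
    intro n y hy
    have hmem : n • y ∈ I := zsmul_mem hy n
    rw [Φdef y hy, Φdef (n • y) hmem]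
    have : (⟨n • y, hmem⟩ : I) = n • (⟨y, hy⟩ : I) := rfl
    rw [this, map_zsmul]
    simp
  -- powers of a stay in M
  have hpow : ∀ (k : ℕ), ∀ m ∈ M, a ^ k * m ∈ M := by
    intro k
    induction k with
    | zero => intro m hm; simpa using hm
    | succ k ih =>
      intro m hm
      have : a ^ (k + 1) * m = a * (a ^ k * m) := by ring
      rw [this]
      exact haM _ (ih m hm)
  -- one step of the descent
  have hstep : ∀ m ∈ M, Φ ((1 - a) * (a * m)) ≤ Φ ((1 - a) * m) := by
    intro m hm
    have h1 : (1 - a) ^ 2 * m ∈ M := hsq (1 - a) m hm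
    have h2 : (1 - a) * (a * m) ∈ I := I.mul_mem_left _ (hMI (haM m hm))
    have hid : (1 - a) * m = (1 - a) ^ 2 * m + (1 - a) * (a * m) := by ring
    calc Φ ((1 - a) * (a * m)) ≤ Φ ((1 - a) ^ 2 * m) + Φ ((1 - a) * (a * m)) := by
          linarith [Φnn _ h1]
      _ = Φ ((1 - a) * m) := by rw [← Φadd _ (hMI h1) _ h2, ← hid]
  -- iterated descent
  have hchain : ∀ n : ℕ, Φ ((1 - a) * (a ^ n * x)) ≤ Φ ((1 - a) * x) := by
    intro n
    induction n with
    | zero => simp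
    | succ n ih =>
      have h1 : (1 - a) * (a ^ (n + 1) * x) = (1 - a) * (a * (a ^ n * x)) := by ring
      rw [h1]
      exact le_trans (hstep _ (hpow n x hx)) ih
  -- lower bound for each step
  have hlow : ∀ n : ℕ, -Φ (a ^ (n + 1) * x) ≤ Φ ((1 - a) * (a ^ n * x)) := by
    intro n
    have hmem : a ^ n * x ∈ M := hpow n x hx
    have hid : a ^ n * x = (1 - a) * (a ^ n * x) + a ^ (n + 1) * x := by ring
    have h1 : (1 - a) * (a ^ n * x) ∈ I := I.mul_mem_left _ (hMI hmem)
    have h2 : a ^ (n + 1) * x ∈ I := hMI (hpow (n + 1) x hx)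
    have := Φadd _ h1 _ h2
    rw [← hid] at this
    have h0 := Φnn _ hmem
    linarith
  -- halving for u
  have huhalf : ∀ k : ℕ, Φ (a ^ (k + 1) * u) + Φ (a ^ (k + 1) * u) ≤ Φ (a ^ k * u) := by
    intro k
    have h1 : a ^ k * ((1 - 2 * a) * u) ∈ M := hpow k _ hau
    have h2 : a ^ (k + 1) * u ∈ M := hpow (k + 1) u hu
    have hid : a ^ k * u = a ^ k * ((1 - 2 * a) * u) + (a ^ (k + 1) * u + a ^ (k + 1) * u) := by
      ring
    have hadd : Φ (a ^ k * u)
        = Φ (a ^ k * ((1 - 2 * a) * u)) + Φ (a ^ (k + 1) * u + a ^ (k + 1) * u) := by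
      rw [hid]
      exact Φadd _ (hMI h1) _ (I.add_mem (hMI h2) (hMI h2))
    rw [Φadd _ (hMI h2) _ (hMI h2)] at hadd
    have := Φnn _ h1
    linarith
  have hupow : ∀ k : ℕ, Φ (a ^ k * u) ≤ Φ u * (1 / 2) ^ k := by
    intro k
    induction k with
    | zero => simp
    | succ k ih =>
      have := huhalf k
      have h : Φ (a ^ (k + 1) * u) ≤ Φ (a ^ k * u) / 2 := by linarith
      calc Φ (a ^ (k + 1) * u) ≤ Φ (a ^ k * u) / 2 := h
        _ ≤ Φ u * (1 / 2) ^ k / 2 := by linarith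
        _ = Φ u * (1 / 2) ^ (k + 1) := by ring
  -- order-unit bound for x
  obtain ⟨m, hm, n0, hx'⟩ := hord (-x) (I.neg_mem (hMI hx))
  have hxm : x + m = (-n0) • u := by
    have : x = -(m + n0 • u) := by rw [← hx']; ring
    rw [this]; push_cast [neg_zsmul]; ring
  set C : ℝ := |(-n0 : ℝ)| * Φ u with hC
  have hC0 : 0 ≤ C := mul_nonneg (abs_nonneg _) (Φnn u hu)
  have hbound : ∀ k : ℕ, Φ (a ^ k * x) ≤ C * (1 / 2) ^ k := by
    intro k
    have h1 : a ^ k * x ∈ M := hpow k x hx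
    have h2 : a ^ k * m ∈ M := hpow k m hm
    have hu' : a ^ k * u ∈ M := hpow k u hu
    have hid : a ^ k * x + a ^ k * m = (-n0) • (a ^ k * u) := by
      have : a ^ k * x + a ^ k * m = a ^ k * (x + m) := by ring
      rw [this, hxm]
      push_cast [zsmul_eq_mul]; ring
    have hΦeq : Φ (a ^ k * x) + Φ (a ^ k * m) = (-n0 : ℝ) * Φ (a ^ k * u) := by
      rw [← Φadd _ (hMI h1) _ (hMI h2), hid, Φsmul _ _ (hMI hu')]
      push_cast; ring
    have h3 : Φ (a ^ k * x) ≤ (-n0 : ℝ) * Φ (a ^ k * u) := by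
      have := Φnn _ h2; linarith
    have h4 : (-n0 : ℝ) * Φ (a ^ k * u) ≤ |(-n0 : ℝ)| * Φ (a ^ k * u) :=
      mul_le_mul_of_nonneg_right (le_abs_self _) (Φnn _ hu')
    have h5 : |(-n0 : ℝ)| * Φ (a ^ k * u) ≤ |(-n0 : ℝ)| * (Φ u * (1 / 2) ^ k) :=
      mul_le_mul_of_nonneg_left (hupow k) (abs_nonneg _)
    calc Φ (a ^ k * x) ≤ |(-n0 : ℝ)| * (Φ u * (1 / 2) ^ k) := by linarith
      _ = C * (1 / 2) ^ k := by rw [hC]; ring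
  -- combine everything
  set v : ℝ := Φ ((1 - a) * x) with hv
  have hvlow : ∀ n : ℕ, -(C * (1 / 2) ^ n) ≤ v := by
    intro n
    have h1 := hchain n
    have h2 := hlow n
    have h3 := hbound (n + 1)
    have h4 : C * (1 / 2) ^ (n + 1) ≤ C * (1 / 2) ^ n := by
      apply mul_le_mul_of_nonneg_left _ hC0
      apply pow_le_pow_of_le_one (by norm_num) (by norm_num)
      omega
    linarith
  have hv0 : 0 ≤ v := by
    by_contra h
    push_neg at h
    have hC1 : (0 : ℝ) < C + 1 := by linarith
    obtain ⟨n, hn⟩ := exists_pow_lt_of_lt_one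
      (show (0 : ℝ) < -v / (C + 1) from div_pos (by linarith) hC1)
      (show (1 / 2 : ℝ) < 1 by norm_num)
    have h1 : (C + 1) * (1 / 2 : ℝ) ^ n < -v := by
      have := (lt_div_iff₀ hC1).mp hn
      linarith
    have h2 : C * (1 / 2 : ℝ) ^ n ≤ (C + 1) * (1 / 2) ^ n := by
      apply mul_le_mul_of_nonneg_right (by linarith) (by positivity)
    have := hvlow n
    linarith
  have hfin : φ ⟨(1 - a) * x, I.mul_mem_left (1 - a) (hMI hx)⟩ = v := by
    rw [hv, Φdef]
  rw [hfin]
  exact hv0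
end

section
/- Let $A$ be a commutative ring containing $\mathbb{Q}$ and $M \subseteq A$ a quadratic module. If $(A, M)$ has an order unit, then $M$ is archimedean (i.e., 1 is also an order unit: $A = \mathbb{Z} + M$). -/
/-!
Write `a ≤ b` for `b - a ∈ M`. The elements bounded above by some natural number form an additive
submonoid containing `-M`, so it suffices to bound `±u`. Clearly `-u ≤ 0`, and writing
`-u² = m + k u` with `m ∈ M` and completing the square gives
`(k - 1)² - u = 3 c² + m + (u + c)² ∈ M` for `c = (k - 1) / 2`, which is where `ℚ ⊆ A` is used.
-/

namespace AddSubmonoid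

lemma zsmul_mem_of_mem_of_neg_mem {G : Type*} [AddGroup G] (S : AddSubmonoid G) {u : G}
    (hu : u ∈ S) (hu' : -u ∈ S) (k : ℤ) : k • u ∈ S := by
  induction k using Int.induction_on with
  | zero => simp
  | succ k ih => rw [add_one_zsmul]; exact S.add_mem ih hu
  | pred k ih => rw [sub_one_zsmul]; exact S.add_mem ih hu'

variable {A : Type*} [CommRing A] (M : AddSubmonoid A)

def boundedAbove : AddSubmonoid A where
  carrier := {a | ∃ n : ℕ, (n : A) - a ∈ M}
  zero_mem' := ⟨0, by simp⟩
  add_mem' := by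
    rintro a b ⟨n, hn⟩ ⟨k, hk⟩
    exact ⟨n + k, by simpa [add_sub_add_comm] using M.add_mem hn hk⟩

variable {M}

lemma neg_mem_boundedAbove {m : A} (hm : m ∈ M) : -m ∈ M.boundedAbove :=
  ⟨0, by simpa using hm⟩

lemma sq_mem (hM1 : (1 : A) ∈ M) (hsq : ∀ a : A, ∀ m ∈ M, a ^ 2 * m ∈ M) (a : A) : a ^ 2 ∈ M := by
  simpa using hsq a 1 hM1

lemma orderUnit_mem_boundedAbove [Algebra ℚ A] (hM1 : (1 : A) ∈ M)
    (hsq : ∀ a : A, ∀ m ∈ M, a ^ 2 * m ∈ M) {u : A}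
    (hu : ∀ a : A, ∃ m ∈ M, ∃ n : ℤ, a = m + n • u) : u ∈ M.boundedAbove := by
  obtain ⟨m, hm, k, hk⟩ := hu (-u ^ 2)
  set c : A := algebraMap ℚ A ((k - 1) / 2)
  have hc : 2 * c = k - 1 := by
    simp only [c, ← map_ofNat (algebraMap ℚ A) 2, ← map_mul]
    simp [mul_div_cancel₀]
  refine ⟨(k - 1).natAbs ^ 2, ?_⟩
  have key : (((k - 1).natAbs ^ 2 : ℕ) : A) - u = 3 • c ^ 2 + (m + (u + c) ^ 2) := by
    have hN : (((k - 1).natAbs ^ 2 : ℕ) : A) = ((k : A) - 1) ^ 2 := by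
      exact_mod_cast congrArg (Int.cast : ℤ → A) (Int.natAbs_sq (k - 1))
    rw [hN, nsmul_eq_mul]
    rw [zsmul_eq_mul] at hk
    linear_combination hk - (u + k - 1 + 2 * c) * hc
  rw [key]
  exact M.add_mem (M.nsmul_mem (sq_mem hM1 hsq c) 3) (M.add_mem hm (sq_mem hM1 hsq _))

lemma boundedAbove_eq_top_of_orderUnit [Algebra ℚ A] (hM1 : (1 : A) ∈ M)
    (hsq : ∀ a : A, ∀ m ∈ M, a ^ 2 * m ∈ M) {u : A} (huM : u ∈ M)
    (hu : ∀ a : A, ∃ m ∈ M, ∃ n : ℤ, a = m + n • u) : M.boundedAbove = ⊤ := by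
  refine (eq_top_iff' _).2 fun a ↦ ?_
  obtain ⟨m, hm, k, hk⟩ := hu (-a)
  rw [← neg_neg a, hk, neg_add, ← neg_smul]
  exact add_mem (neg_mem_boundedAbove hm) <| M.boundedAbove.zsmul_mem_of_mem_of_neg_mem
    (orderUnit_mem_boundedAbove hM1 hsq hu) (neg_mem_boundedAbove huM) (-k)

end AddSubmonoid

theorem archimedean_of_orderUnit_general {A : Type*} [CommRing A] [Algebra ℚ A] (M : Set A)
    (hM1 : (1 : A) ∈ M)
    (hMadd : ∀ x ∈ M, ∀ y ∈ M, x + y ∈ M)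
    (hsq : ∀ a : A, ∀ m ∈ M, a ^ 2 * m ∈ M)
    (hord : ∃ u ∈ M, ∀ a : A, ∃ m ∈ M, ∃ n : ℤ, a = m + n • u) :
    ∀ a : A, ∃ n : ℕ, (n : A) - a ∈ M := by
  let M' : AddSubmonoid A :=
    { carrier := M
      add_mem' := fun ha hb ↦ hMadd _ ha _ hb
      zero_mem' := by simpa using hsq 0 1 hM1 }
  obtain ⟨u, huM, hu⟩ := hord
  exact (AddSubmonoid.eq_top_iff' _).1 <|
    AddSubmonoid.boundedAbove_eq_top_of_orderUnit (M := M') hM1 hsq huM hu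

/-- If `ℚ ⊆ A` and `M` is a quadratic module in `A` such that `(A,M)` has an order
unit, then `M` is archimedean, i.e. `A = ℤ + M`. -/
theorem archimedean_of_orderUnit {A : Type*} [CommRing A] [Algebra ℚ A] (M : Set A)
    (hM0 : (0 : A) ∈ M) (hM1 : (1 : A) ∈ M)
    (hMadd : ∀ x ∈ M, ∀ y ∈ M, x + y ∈ M)
    (hsq : ∀ a : A, ∀ m ∈ M, a ^ 2 * m ∈ M)
    (hord : ∃ u ∈ M, ∀ a : A, ∃ m ∈ M, ∃ n : ℤ, a = m + n • u) :
    ∀ a : A, ∃ n : ℕ, (n : A) - a ∈ M :=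
  archimedean_of_orderUnit_general M hM1 hMadd hsq hord
end

section
/- Let $M$ be a module over an archimedean subsemiring $S$ of a commutative ring $A$, and let $f \in A$ with $\phi(f) > 0$ for every ring homomorphism $\phi: A \to \mathbb{R}$ with $\phi|_M \geq 0$. Then $nf \in M$ for some $n \in \mathbb{N}$. (Representation Theorem of Stone–Krivine–Kadison–Dubois.) -/
/-!
Suppose no positive multiple of `f` lies in `M`. Then `1` is still an order unit of the additive
cone `M - ℕ f`, and no negative integer lies in it, so the Zorn's-lemma extension argument for
ordered abelian groups yields a state `L` (additive, `L 1 = 1`, nonnegative on `M`) with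
`L f ≤ 0`. Since `M` is archimedean, the states form a compact convex subset of `A → ℝ`, so by
Krein–Milman `L ↦ L f` attains its minimum at an extreme state. For an extreme state `L` and
`s ∈ S` with `n - s ∈ S`, the positive functionals `y ↦ L (s y)` and `y ↦ L ((n - s) y)` add up
to `n • L`, and extremality forces `L (s y) = L s * L y`. As `A = ℤ + S`, `L` is then a ring
homomorphism nonnegative on `M` with `L f ≤ 0`.
-/

open Set

section Extension

variable {G : Type*} [AddCommGroup G] {C : AddSubmonoid G} {u : G} {H : AddSubgroup (G × ℝ)}

/-- As `0 ∈ C`, the positivity condition makes `H` the graph of an additive map on a subgroup of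
`G`, sending `u` to `1`. -/
def IsPartialState (C : AddSubmonoid G) (u : G) (H : AddSubgroup (G × ℝ)) : Prop :=
  (u, 1) ∈ H ∧ ∀ p ∈ H, p.1 ∈ C → 0 ≤ p.2

namespace IsPartialState

theorem eq_of_mem (hH : IsPartialState C u H) {a : G} {t t' : ℝ} (ht : (a, t) ∈ H)
    (ht' : (a, t') ∈ H) : t = t' := by
  have h₁ := hH.2 _ (H.sub_mem ht ht') (by simp)
  have h₂ := hH.2 _ (H.sub_mem ht' ht) (by simp)
  simp only [Prod.mk_sub_mk, sub_nonneg] at h₁ h₂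
  linarith

theorem div_le_div_of_mem (hH : IsPartialState C u H) {p p' : G × ℝ} (hp : p ∈ H)
    (hp' : p' ∈ H) {q q' : ℕ} (hq : 0 < q) (hq' : 0 < q') {a : G}
    (ha : p.1 + q • a ∈ C) (ha' : p'.1 - q' • a ∈ C) : -p.2 / q ≤ p'.2 / q' := by
  have hC : q' • p.1 + q • p'.1 ∈ C := by
    convert C.add_mem (C.nsmul_mem ha q') (C.nsmul_mem ha' q) using 1
    simp only [smul_add, smul_sub, smul_smul, mul_comm q q']
    abel
  have := hH.2 _ (H.add_mem (H.nsmul_mem hp q') (H.nsmul_mem hp' q)) hC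
  simp only [Prod.snd_add, Prod.smul_snd, nsmul_eq_mul] at this
  rw [div_le_div_iff₀ (by positivity) (by positivity)]
  nlinarith

theorem exists_extension (hunit : ∀ a, ∃ n : ℕ, n • u + a ∈ C) (hH : IsPartialState C u H)
    (a : G) : ∃ H', H ≤ H' ∧ IsPartialState C u H' ∧ ∃ t, (a, t) ∈ H' := by
  -- `p.1 + q • a ∈ C` forces the value at `a` to be `≥ -p.2 / q`, and `p.1 - q • a ∈ C` forces it
  -- to be `≤ p.2 / q`; by `div_le_div_of_mem` the supremum of the lower bounds satisfies both.
  set lower : Set ℝ := {r | ∃ p ∈ H, ∃ q : ℕ, 0 < q ∧ p.1 + q • a ∈ C ∧ -p.2 / q = r}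
  have hne : lower.Nonempty := by
    obtain ⟨n, hn⟩ := hunit a
    exact ⟨_, n • (u, 1), H.nsmul_mem hH.1 n, 1, one_pos, by simpa using hn, rfl⟩
  have hbdd : BddAbove lower := by
    obtain ⟨n, hn⟩ := hunit (-a)
    refine ⟨n, ?_⟩
    rintro _ ⟨p, hp, q, hq, ha, rfl⟩
    simpa using hH.div_le_div_of_mem hp (H.nsmul_mem hH.1 n) hq one_pos ha
      (by simpa [sub_eq_add_neg] using hn)
  set α := sSup lower
  refine ⟨H ⊔ AddSubgroup.zmultiples (a, α), le_sup_left, ⟨le_sup_left (a := H) hH.1, ?_⟩,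
    α, AddSubgroup.mem_sup_right (AddSubgroup.mem_zmultiples _)⟩
  rintro _ hmem hC
  obtain ⟨p, hp, _, ⟨k, rfl⟩, rfl⟩ := AddSubgroup.mem_sup.1 hmem
  obtain ⟨q, rfl | rfl⟩ := k.eq_nat_or_neg
  · rcases q.eq_zero_or_pos with rfl | hq
    · simpa using hH.2 p hp (by simpa using hC)
    · have := le_csSup hbdd ⟨p, hp, q, hq, by simpa using hC, rfl⟩
      rw [div_le_iff₀ (by positivity)] at this
      simp only [Prod.snd_add, Prod.smul_snd, natCast_zsmul, nsmul_eq_mul]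
      linarith
  · rcases q.eq_zero_or_pos with rfl | hq
    · simpa using hH.2 p hp (by simpa using hC)
    · have := csSup_le hne (by
        rintro _ ⟨p₀, hp₀, q₀, hq₀, ha₀, rfl⟩
        exact hH.div_le_div_of_mem hp₀ hp hq₀ hq ha₀ (by simpa [sub_eq_add_neg] using hC))
      rw [le_div_iff₀ (by positivity)] at this
      simp only [Prod.snd_add, Prod.snd_neg, Prod.smul_snd, neg_smul, natCast_zsmul,
        nsmul_eq_mul]
      linarith

theorem exists_addMonoidHom_of_total (hH : IsPartialState C u H) (htot : ∀ a, ∃ t, (a, t) ∈ H) :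
    ∃ L : G →+ ℝ, L u = 1 ∧ ∀ c ∈ C, 0 ≤ L c := by
  choose L hL using htot
  exact ⟨AddMonoidHom.mk' L fun x y => hH.eq_of_mem (hL (x + y)) (H.add_mem (hL x) (hL y)),
    hH.eq_of_mem (hL u) hH.1, fun c hc => hH.2 _ (hL c) hc⟩

end IsPartialState

theorem exists_addMonoidHom_nonneg (hunit : ∀ a, ∃ n : ℕ, n • u + a ∈ C)
    (hu : ∀ n : ℤ, n • u ∈ C → 0 ≤ n) : ∃ L : G →+ ℝ, L u = 1 ∧ ∀ c ∈ C, 0 ≤ L c := by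
  have h₀ : IsPartialState C u (AddSubgroup.zmultiples (u, 1)) := by
    refine ⟨AddSubgroup.mem_zmultiples _, ?_⟩
    rintro _ ⟨n, rfl⟩ hn
    simpa using hu n (by simpa using hn)
  have hchain : ∀ c ⊆ {H | IsPartialState C u H}, IsChain (· ≤ ·) c → ∀ H ∈ c,
      ∃ ub ∈ {H | IsPartialState C u H}, ∀ H' ∈ c, H' ≤ ub := by
    intro c hc hc_chain H hH
    have hmem {p} := AddSubgroup.mem_sSup_of_directedOn (x := p) ⟨H, hH⟩ hc_chain.directedOn
    refine ⟨sSup c, ⟨hmem.2 ⟨H, hH, (hc hH).1⟩, fun p hp => ?_⟩, fun _ => le_sSup⟩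
    obtain ⟨H', hH', hp⟩ := hmem.1 hp
    exact (hc hH').2 p hp
  obtain ⟨H, -, hmax⟩ := zorn_le_nonempty₀ _ hchain _ h₀
  refine hmax.prop.exists_addMonoidHom_of_total fun a => ?_
  obtain ⟨H', hle, hH', t, ht⟩ := hmax.prop.exists_extension hunit a
  exact ⟨t, hmax.2 hH' hle ht⟩

end Extension

theorem IsCompact.exists_mem_extremePoints_forall_le {E : Type*} [AddCommGroup E] [Module ℝ E]
    [TopologicalSpace E] [T2Space E] [IsTopologicalAddGroup E] [ContinuousSMul ℝ E]
    [LocallyConvexSpace ℝ E] {s : Set E} (hs : IsCompact s) (hne : s.Nonempty)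
    (l : StrongDual ℝ E) : ∃ x ∈ s.extremePoints ℝ, ∀ y ∈ s, l x ≤ l y := by
  have hF : IsExposed ℝ s {x ∈ s | ∀ y ∈ s, (-l) y ≤ (-l) x} := fun _ => ⟨-l, rfl⟩
  obtain ⟨z, hz, hmin⟩ := hs.exists_isMinOn hne l.continuous.continuousOn
  obtain ⟨x, hx⟩ := (hF.isCompact hs).extremePoints_nonempty
    ⟨z, hz, fun y hy => by simpa using hmin hy⟩
  exact ⟨x, hF.isExtreme.extremePoints_subset_extremePoints hx,
    fun y hy => by simpa using hx.1.2 y hy⟩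

section States

variable {A : Type*} [CommRing A] {M S : Set A} {ℓ ℓ' L : A → ℝ}

def positiveFunctionals (M : Set A) : Set (A → ℝ) :=
  {ℓ | (∀ x y, ℓ (x + y) = ℓ x + ℓ y) ∧ ∀ m ∈ M, 0 ≤ ℓ m}

def states (M : Set A) : Set (A → ℝ) :=
  positiveFunctionals M ∩ {L | L 1 = 1}

theorem isClosed_states : IsClosed (states M) := by
  have : IsClosed {ℓ : A → ℝ | ∀ m ∈ M, 0 ≤ ℓ m} := by
    simp only [ofPred_forall]
    exact isClosed_iInter fun m => isClosed_iInter fun _ =>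
      isClosed_le continuous_const (continuous_apply m)
  exact ((isClosed_setOfPred_map_add A ℝ).inter this).inter (isClosed_setOfPred_map_one A ℝ)

theorem convex_states : Convex ℝ (states M) := by
  rintro L₁ ⟨⟨hadd₁, hpos₁⟩, h₁⟩ L₂ ⟨⟨hadd₂, hpos₂⟩, h₂⟩ a b ha hb hab
  refine ⟨⟨fun x y => ?_, fun m hm => ?_⟩, ?_⟩
  · simp only [Pi.add_apply, Pi.smul_apply, smul_eq_mul, hadd₁, hadd₂]
    ring
  · have := hpos₁ m hm
    have := hpos₂ m hm
    simp only [Pi.add_apply, Pi.smul_apply, smul_eq_mul]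
    positivity
  · simp only [mem_ofPred_eq, Pi.add_apply, Pi.smul_apply, smul_eq_mul] at h₁ h₂ ⊢
    rw [h₁, h₂, mul_one, mul_one, hab]

theorem smul_mem_positiveFunctionals (hℓ : ℓ ∈ positiveFunctionals M) {c : ℝ} (hc : 0 ≤ c) :
    c • ℓ ∈ positiveFunctionals M :=
  ⟨fun x y => by simp [hℓ.1, mul_add], fun m hm => mul_nonneg hc (hℓ.2 m hm)⟩

theorem comp_mul_left_mem_positiveFunctionals (hℓ : ℓ ∈ positiveFunctionals M) {s : A}
    (hs : ∀ m ∈ M, s * m ∈ M) : (fun y => ℓ (s * y)) ∈ positiveFunctionals M :=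
  ⟨fun x y => by simp [mul_add, hℓ.1], fun m hm => hℓ.2 _ (hs m hm)⟩

theorem apply_le_of_natCast_sub_mem (hℓ : ℓ ∈ positiveFunctionals M) {n : ℕ} {a : A}
    (h : (n : A) - a ∈ M) : ℓ a ≤ n * ℓ 1 := by
  obtain ⟨φ, rfl⟩ : ∃ φ : A →+ ℝ, ⇑φ = ℓ := ⟨AddMonoidHom.mk' ℓ hℓ.1, rfl⟩
  have := hℓ.2 _ h
  rw [map_sub, ← nsmul_one, map_nsmul, nsmul_eq_mul] at this
  linarith

theorem le_apply_of_natCast_add_mem (hℓ : ℓ ∈ positiveFunctionals M) {n : ℕ} {a : A}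
    (h : (n : A) + a ∈ M) : -(n * ℓ 1) ≤ ℓ a := by
  obtain ⟨φ, rfl⟩ : ∃ φ : A →+ ℝ, ⇑φ = ℓ := ⟨AddMonoidHom.mk' ℓ hℓ.1, rfl⟩
  have := hℓ.2 _ h
  rw [map_add, ← nsmul_one, map_nsmul, nsmul_eq_mul] at this
  linarith

theorem inv_smul_mem_states (hℓ : ℓ ∈ positiveFunctionals M) (h : 0 < ℓ 1) :
    (ℓ 1)⁻¹ • ℓ ∈ states M :=
  ⟨smul_mem_positiveFunctionals hℓ (inv_nonneg.2 h.le), by simp [h.ne']⟩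

variable (hM : ∀ a : A, ∃ n : ℕ, (n : A) - a ∈ M)
include hM

theorem isCompact_states : IsCompact (states M) := by
  choose n hn using hM
  refine (isCompact_univ_pi fun a => isCompact_Icc (a := -(n (-a) : ℝ)) (b := n a))
    |>.of_isClosed_subset isClosed_states fun L ⟨hL, (h₁ : L 1 = 1)⟩ a _ => ⟨?_, ?_⟩
  · simpa [h₁] using le_apply_of_natCast_add_mem hL (by simpa using hn (-a))
  · simpa [h₁] using apply_le_of_natCast_sub_mem hL (hn a)

theorem eq_zero_of_apply_one_eq_zero (hℓ : ℓ ∈ positiveFunctionals M) (h₁ : ℓ 1 = 0) :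
    ℓ = 0 := by
  funext a
  obtain ⟨n, hn⟩ := hM a
  obtain ⟨n', hn'⟩ := hM (-a)
  have := apply_le_of_natCast_sub_mem hℓ hn
  have := le_apply_of_natCast_add_mem hℓ (by simpa using hn')
  simp only [h₁, mul_zero, neg_zero, Pi.zero_apply] at *
  linarith

theorem eq_apply_one_smul_of_add_eq_smul (hM1 : (1 : A) ∈ M)
    (hL : L ∈ (states M).extremePoints ℝ) (hℓ : ℓ ∈ positiveFunctionals M)
    (hℓ' : ℓ' ∈ positiveFunctionals M) {c : ℝ} (hsum : ℓ + ℓ' = c • L) : ℓ = ℓ 1 • L := by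
  have hL1 : L 1 = 1 := hL.1.2
  have hc : ℓ 1 + ℓ' 1 = c := by simpa [hL1] using congrFun hsum 1
  rcases (hℓ.2 1 hM1).eq_or_lt with h₁ | h₁
  · rw [← h₁, zero_smul]
    exact eq_zero_of_apply_one_eq_zero hM hℓ h₁.symm
  rcases (hℓ'.2 1 hM1).eq_or_lt with h₁' | h₁'
  · rw [eq_zero_of_apply_one_eq_zero hM hℓ' h₁'.symm, add_zero] at hsum
    rw [← h₁', add_zero] at hc
    rwa [hc]
  have hseg : L ∈ openSegment ℝ ((ℓ 1)⁻¹ • ℓ) ((ℓ' 1)⁻¹ • ℓ') := by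
    subst hc
    refine ⟨ℓ 1 / (ℓ 1 + ℓ' 1), ℓ' 1 / (ℓ 1 + ℓ' 1), by positivity, by positivity,
      by rw [← add_div, div_self (by positivity)], funext fun y => ?_⟩
    have := congrFun hsum y
    simp only [Pi.add_apply, Pi.smul_apply, smul_eq_mul] at this ⊢
    field_simp
    linarith
  rw [← hL.2 (inv_smul_mem_states hℓ h₁) (inv_smul_mem_states hℓ' h₁') hseg,
    smul_inv_smul₀ h₁.ne']

theorem map_mul_of_mem_extremePoints_states (hM1 : (1 : A) ∈ M)
    (harch : ∀ a : A, ∃ n : ℕ, (n : A) - a ∈ S) (hSM : ∀ s ∈ S, ∀ m ∈ M, s * m ∈ M)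
    (hL : L ∈ (states M).extremePoints ℝ) (a b : A) : L (a * b) = L a * L b := by
  obtain ⟨φ, rfl⟩ : ∃ φ : A →+ ℝ, ⇑φ = L := ⟨AddMonoidHom.mk' L hL.1.1.1, rfl⟩
  have hnat (n : ℕ) (y : A) : φ (n * y) = n * φ y := by
    rw [← nsmul_eq_mul, map_nsmul, nsmul_eq_mul]
  have hS (s : A) (hs : s ∈ S) (y : A) : φ (s * y) = φ s * φ y := by
    obtain ⟨n, hn⟩ := harch s
    have := eq_apply_one_smul_of_add_eq_smul hM hM1 hL
      (comp_mul_left_mem_positiveFunctionals hL.1.1 (hSM s hs))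
      (comp_mul_left_mem_positiveFunctionals hL.1.1 (hSM _ hn)) (c := n)
      (funext fun y => by simp [← map_add, ← add_mul, hnat])
    simpa using congrFun this y
  obtain ⟨n, hn⟩ := harch (-a)
  have := hS _ hn b
  rw [sub_neg_eq_add, add_mul, map_add, map_add, hnat, map_natCast' φ hL.1.2] at this
  linear_combination this

theorem exists_ringHom_coe_eq_of_mem_extremePoints_states (hM1 : (1 : A) ∈ M)
    (harch : ∀ a : A, ∃ n : ℕ, (n : A) - a ∈ S) (hSM : ∀ s ∈ S, ∀ m ∈ M, s * m ∈ M)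
    (hL : L ∈ (states M).extremePoints ℝ) : ∃ φ : A →+* ℝ, ⇑φ = L :=
  ⟨{ AddMonoidHom.mk' L hL.1.1.1 with
      map_one' := hL.1.2
      map_mul' := map_mul_of_mem_extremePoints_states hM hM1 harch hSM hL }, rfl⟩

end States

theorem exists_state_apply_nonpos {A : Type*} [CommRing A] (M : AddSubmonoid A)
    (hM : ∀ a : A, ∃ n : ℕ, (n : A) - a ∈ M) (hM1 : (1 : A) ∈ M) {f : A}
    (hf : ∀ n : ℕ, 0 < n → n • f ∉ M) :
    ∃ L ∈ states (M : Set A), L f ≤ 0 := by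
  set C := M ⊔ AddSubmonoid.multiples (-f)
  have hunit (a : A) : ∃ n : ℕ, n • (1 : A) + a ∈ C :=
    (hM (-a)).imp fun n hn => le_sup_left (a := M) (by simpa using hn)
  have hu (k : ℤ) (hk : k • (1 : A) ∈ C) : 0 ≤ k := by
    obtain ⟨m, hm, _, ⟨i, rfl⟩, hsum⟩ := AddSubmonoid.mem_sup.1 hk
    obtain ⟨j, rfl | rfl⟩ := k.eq_nat_or_neg
    · positivity
    rcases j.eq_zero_or_pos with rfl | hj
    · simp
    simp only [neg_smul, natCast_zsmul, nsmul_one] at hsum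
    rcases i.eq_zero_or_pos with rfl | hi
    · obtain ⟨n, hn⟩ := hM (-f)
      refine (hf j hj ?_).elim
      convert M.add_mem (M.nsmul_mem hn j) (M.nsmul_mem hm n) using 1
      simp only [zero_smul, add_zero] at hsum
      simp only [hsum, nsmul_eq_mul]
      ring
    · refine (hf i hi ?_).elim
      convert M.add_mem hm (M.nsmul_mem hM1 j) using 1
      simp only [smul_neg, nsmul_eq_mul, mul_one] at hsum ⊢
      linear_combination -hsum
  obtain ⟨L, hL1, hLC⟩ := exists_addMonoidHom_nonneg hunit hu
  refine ⟨L, ⟨⟨L.map_add, fun m hm => hLC m (le_sup_left (a := M) hm)⟩, hL1⟩, ?_⟩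
  have := hLC (-f) (le_sup_right (a := M) (AddSubmonoid.mem_multiples _))
  rw [map_neg] at this
  linarith

theorem representation_theorem_general {A : Type*} [CommRing A] (S M : Set A)
    (harch : ∀ a : A, ∃ n : ℕ, (n : A) - a ∈ S)
    (hM0 : (0 : A) ∈ M) (hM1 : (1 : A) ∈ M)
    (hMadd : ∀ x ∈ M, ∀ y ∈ M, x + y ∈ M)
    (hSM : ∀ s ∈ S, ∀ m ∈ M, s * m ∈ M)
    (f : A) (hf : ∀ ϕ : A →+* ℝ, (∀ m ∈ M, 0 ≤ ϕ m) → 0 < ϕ f) :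
    ∃ n : ℕ, 0 < n ∧ n • f ∈ M := by
  by_contra! hfM
  have hM (a : A) : ∃ n : ℕ, (n : A) - a ∈ M :=
    (harch a).imp fun n hn => by simpa using hSM _ hn 1 hM1
  let M' : AddSubmonoid A := ⟨⟨M, fun {x y} hx hy => hMadd x hx y hy⟩, hM0⟩
  obtain ⟨L₀, hL₀, hL₀f⟩ := exists_state_apply_nonpos (M := M') hM hM1 hfM
  obtain ⟨L, hL, hLf⟩ := (isCompact_states hM).exists_mem_extremePoints_forall_le ⟨L₀, hL₀⟩
    (ContinuousLinearMap.proj f)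
  obtain ⟨φ, rfl⟩ := exists_ringHom_coe_eq_of_mem_extremePoints_states hM hM1 harch hSM hL
  have hφf : φ f ≤ L₀ f := hLf L₀ hL₀
  linarith [hf φ hL.1.1.2]

/-- Representation Theorem (Stone–Krivine–Kadison–Dubois): if `M` is a module over an
archimedean subsemiring `S` of `A` and `f ∈ A` satisfies `ϕ(f) > 0` for every ring
homomorphism `ϕ : A → ℝ` nonnegative on `M`, then `nf ∈ M` for some `n ∈ ℕ`. -/
theorem representation_theorem {A : Type*} [CommRing A] (S M : Set A)
    (hS0 : (0 : A) ∈ S) (hS1 : (1 : A) ∈ S)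
    (hSadd : ∀ x ∈ S, ∀ y ∈ S, x + y ∈ S)
    (hSmul : ∀ x ∈ S, ∀ y ∈ S, x * y ∈ S)
    (harch : ∀ a : A, ∃ n : ℕ, (n : A) - a ∈ S)
    (hM0 : (0 : A) ∈ M) (hM1 : (1 : A) ∈ M)
    (hMadd : ∀ x ∈ M, ∀ y ∈ M, x + y ∈ M)
    (hSM : ∀ s ∈ S, ∀ m ∈ M, s * m ∈ M)
    (f : A) (hf : ∀ ϕ : A →+* ℝ, (∀ m ∈ M, 0 ≤ ϕ m) → 0 < ϕ f) :
    ∃ n : ℕ, 0 < n ∧ n • f ∈ M :=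
  representation_theorem_general S M harch hM0 hM1 hMadd hSM f hf
end

section
/- Let $M$ be an archimedean quadratic module in a commutative ring $A$, and let $f \in A$ with $\phi(f) > 0$ for every ring homomorphism $\phi: A \to \mathbb{R}$ with $\phi|_M \geq 0$. Then $nf \in M$ for some $n \in \mathbb{N}$. (Jacobi–Putinar theorem.) -/
/-!
Adjoin `-f` to `M` as a divisible quadratic module (`n x ∈ M` with `n > 0` implies `x ∈ M`).

If `-1` is not in the result, Zorn's lemma extends it to a maximal divisible quadratic module `U`
with `-1 ∉ U`. Maximality and the archimedean property force `U ∪ -U = A`. Then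
`φ a = inf {p / q | q a ≤ p in U}` is additive and satisfies `φ (a²) = (φ a)²`, so it is a ring
homomorphism `A → ℝ`, nonnegative on `M` and on `-f`: this contradicts the hypothesis on `f`.

Otherwise `σ f - 1 ∈ M'` for a sum of squares `σ`, where `M'` is the divisible closure of `M`.
As `1/N ≤ σ ≤ k` in `M'`, Newton's iteration for `σ^(-1/2)`, whose error bounds have
certificates in `M'`, gives `D, a ∈ ℕ` and `P ∈ A` with `|D² - σ P²| ≤ a` and `(N k + 1) a < D²`.
Then `k D² f` is `k P² (σ f - 1)` plus terms bounded below in `M'`, and it lies in `M'`.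
-/

section

variable {A : Type*} [CommRing A]

structure IsQuadraticModule (M : Set A) : Prop where
  one_mem : (1 : A) ∈ M
  add_mem {x y : A} : x ∈ M → y ∈ M → x + y ∈ M
  sq_mul_mem (a : A) {x : A} : x ∈ M → a ^ 2 * x ∈ M

structure IsDivisibleQuadraticModule (M : Set A) : Prop extends IsQuadraticModule M where
  mem_of_natCast_mul_mem {n : ℕ} {x : A} : n ≠ 0 → (n : A) * x ∈ M → x ∈ M

def IsArchimedeanCone (M : Set A) : Prop :=
  ∀ a : A, ∃ n : ℕ, (n : A) - a ∈ M

/-- `-a ≤ x ≤ a` in the preorder on `A` whose nonnegative elements are `M`. -/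
def AbsLE (M : Set A) (x a : A) : Prop :=
  a - x ∈ M ∧ a + x ∈ M

namespace IsQuadraticModule

variable {M : Set A}

theorem zero_mem (hM : IsQuadraticModule M) : (0 : A) ∈ M := by
  simpa using hM.sq_mul_mem 0 hM.one_mem

theorem sq_mem (hM : IsQuadraticModule M) (a : A) : a ^ 2 ∈ M := by
  simpa using hM.sq_mul_mem a hM.one_mem

theorem mul_mem_of_isSumSq (hM : IsQuadraticModule M) {σ x : A} (hσ : IsSumSq σ) (hx : x ∈ M) :
    σ * x ∈ M := by
  induction hσ with
  | zero => simpa using hM.zero_mem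
  | sq_add a _ ih => rw [add_mul, ← sq]; exact hM.add_mem (hM.sq_mul_mem a hx) ih

theorem natCast_mul_mem (hM : IsQuadraticModule M) (n : ℕ) {x : A} (hx : x ∈ M) :
    (n : A) * x ∈ M :=
  hM.mul_mem_of_isSumSq (.natCast n) hx

theorem natCast_mem (hM : IsQuadraticModule M) (n : ℕ) : (n : A) ∈ M := by
  simpa using hM.natCast_mul_mem n hM.one_mem

theorem natCast_sub_natCast_mem (hM : IsQuadraticModule M) {m n : ℕ} (h : m ≤ n) :
    (n : A) - m ∈ M := by
  simpa [Nat.cast_sub h] using hM.natCast_mem (n - m)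

theorem intCast_mem (hM : IsQuadraticModule M) {m : ℤ} (h : 0 ≤ m) : (m : A) ∈ M := by
  lift m to ℕ using h
  simpa using hM.natCast_mem m

theorem exists_absLE (hM : IsQuadraticModule M) (harch : IsArchimedeanCone M) (x : A) :
    ∃ n : ℕ, 0 < n ∧ AbsLE M x n := by
  obtain ⟨n₁, h₁⟩ := harch x
  obtain ⟨n₂, h₂⟩ := harch (-x)
  refine ⟨n₁ + n₂ + 1, by omega, ?_, ?_⟩
  · convert hM.add_mem h₁ (hM.natCast_mem (n₂ + 1)) using 1; push_cast; ring
  · convert hM.add_mem h₂ (hM.natCast_mem (n₁ + 1)) using 1; push_cast; ring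

end IsQuadraticModule

theorem IsArchimedeanCone.mono {M N : Set A} (hM : IsArchimedeanCone M) (hMN : M ⊆ N) :
    IsArchimedeanCone N :=
  fun a ↦ (hM a).imp fun _ h ↦ hMN h

namespace IsDivisibleQuadraticModule

variable {T : Set A}

theorem nonneg_of_intCast_mem (hT : IsDivisibleQuadraticModule T) (hT1 : (-1 : A) ∉ T) {m : ℤ}
    (h : (m : A) ∈ T) : 0 ≤ m := by
  by_contra! hm
  obtain ⟨n, hn⟩ := Int.exists_eq_neg_ofNat hm.le
  refine hT1 (hT.mem_of_natCast_mul_mem (n := n) (by omega) ?_)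
  simpa [hn] using h

theorem intCast_sub_mem_of_mul_le (hT : IsDivisibleQuadraticModule T) {a : A} {p p' : ℤ}
    {q q' : ℕ} (hq : q ≠ 0) (hle : p * q' ≤ p' * q) (h : (p : A) - q * a ∈ T) :
    (p' : A) - q' * a ∈ T := by
  refine hT.mem_of_natCast_mul_mem hq ?_
  convert hT.add_mem (hT.natCast_mul_mem q' h) (hT.intCast_mem (sub_nonneg.2 hle)) using 1
  push_cast; ring

theorem mul_mem_of_add_eq_natCast (hT : IsDivisibleQuadraticModule T) {x y : A} (hx : x ∈ T)
    (hy : y ∈ T) {n : ℕ} (hn : n ≠ 0) (hxy : x + y = n) : x * y ∈ T := by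
  refine hT.mem_of_natCast_mul_mem hn ?_
  rw [← hxy, show (x + y) * (x * y) = x ^ 2 * y + y ^ 2 * x by ring]
  exact hT.add_mem (hT.sq_mul_mem x hy) (hT.sq_mul_mem y hx)

theorem sq_sub_sq_mem (hT : IsDivisibleQuadraticModule T) {x : A} {a : ℕ} (ha : a ≠ 0)
    (h : AbsLE T x a) : (a : A) ^ 2 - x ^ 2 ∈ T := by
  have := hT.mul_mem_of_add_eq_natCast h.1 h.2 (n := 2 * a) (by omega) (by push_cast; ring)
  convert this using 1; ring

theorem pow_three_sub_pow_three_mem (hT : IsDivisibleQuadraticModule T) {x : A} {a : ℕ}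
    (h : (a : A) - x ∈ T) : (a : A) ^ 3 - x ^ 3 ∈ T := by
  refine hT.mem_of_natCast_mul_mem (n := 4) (by norm_num) ?_
  have key : (4 : ℕ) * ((a : A) ^ 3 - x ^ 3) =
      (2 * x + a) ^ 2 * (a - x) + (3 * a ^ 2 : ℕ) * (a - x) := by
    push_cast; ring
  rw [key]
  exact hT.add_mem (hT.sq_mul_mem _ h) (hT.natCast_mul_mem _ h)

theorem mul_add_mul_mem (hT : IsDivisibleQuadraticModule T) {x y : A} {a b : ℕ} (ha : a ≠ 0)
    (hb : b ≠ 0) (hx : AbsLE T x a) (hy : AbsLE T y b) : (a : A) * b + x * y ∈ T := by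
  refine hT.mem_of_natCast_mul_mem (n := 2 * a * b) (by positivity) ?_
  have key : ((2 * a * b : ℕ) : A) * (a * b + x * y) =
      (b * x + a * y) ^ 2 + (b : A) ^ 2 * (a ^ 2 - x ^ 2) + (a : A) ^ 2 * (b ^ 2 - y ^ 2) := by
    push_cast; ring
  rw [key]
  exact hT.add_mem (hT.add_mem (hT.sq_mem _) (hT.sq_mul_mem _ (hT.sq_sub_sq_mem ha hx)))
    (hT.sq_mul_mem _ (hT.sq_sub_sq_mem hb hy))

/-- One step of Newton's iteration `P ↦ P (3 - σ P²) / 2` for `σ^(-1/2)`, with the denominator `D`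
cleared: the error `e = D² - σ P²` becomes `3 D² e² + e³`. -/
theorem absLE_newton_step (hT : IsDivisibleQuadraticModule T) (σ P : A) {D a : ℕ} (ha : a ≠ 0)
    (h : AbsLE T ((D : A) ^ 2 - σ * P ^ 2) a) :
    AbsLE T (((2 * D ^ 3 : ℕ) : A) ^ 2 - σ * (P * (3 * D ^ 2 - σ * P ^ 2)) ^ 2)
      (3 * D ^ 2 * a ^ 2 + a ^ 3 : ℕ) := by
  set e := (D : A) ^ 2 - σ * P ^ 2
  have he : ((2 * D ^ 3 : ℕ) : A) ^ 2 - σ * (P * (3 * D ^ 2 - σ * P ^ 2)) ^ 2 =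
      3 * D ^ 2 * e ^ 2 + e ^ 3 := by
    simp only [e]; push_cast; ring
  have hcube_sub := hT.pow_three_sub_pow_three_mem h.1
  have hcube_add := hT.pow_three_sub_pow_three_mem (x := -e) (by simpa using h.2)
  have hsq_add := hT.add_mem (hT.natCast_mem (a ^ 2)) (hT.sq_mem e)
  rw [he]
  constructor
  · convert hT.add_mem (hT.natCast_mul_mem (3 * D ^ 2) (hT.sq_sub_sq_mem ha h)) hcube_sub using 1
    push_cast; ring
  · convert hT.add_mem (hT.natCast_mul_mem (3 * D ^ 2) hsq_add) hcube_add using 1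
    push_cast; ring

end IsDivisibleQuadraticModule

theorem newton_error_le {ρ D a : ℝ} {m : ℕ} (hρ₀ : 0 ≤ ρ) (hρ₁ : ρ ≤ 1) (ha : 0 ≤ a)
    (haD : a ≤ ρ ^ (m + 1) * D ^ 2) :
    3 * D ^ 2 * a ^ 2 + a ^ 3 ≤ ρ ^ (m + 2) * (2 * D ^ 3) ^ 2 := by
  have hρa : a ≤ ρ * D ^ 2 := haD.trans (by gcongr; exact pow_le_of_le_one hρ₀ hρ₁ (by omega))
  have hDa : a ≤ D ^ 2 := hρa.trans (by nlinarith [sq_nonneg D])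
  calc 3 * D ^ 2 * a ^ 2 + a ^ 3 ≤ 4 * D ^ 2 * (a * a) := by nlinarith [sq_nonneg a]
    _ ≤ 4 * D ^ 2 * ((ρ ^ (m + 1) * D ^ 2) * (ρ * D ^ 2)) := by gcongr
    _ = ρ ^ (m + 2) * (2 * D ^ 3) ^ 2 := by ring

namespace IsDivisibleQuadraticModule

variable {T : Set A}

theorem exists_absLE_sq_sub_mul_sq_lt (hT : IsDivisibleQuadraticModule T) (σ : A) {D a : ℕ}
    {P : A} (ha : a ≠ 0) (haD : a < D ^ 2) (h : AbsLE T ((D : A) ^ 2 - σ * P ^ 2) a) (c : ℕ) :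
    ∃ (D' a' : ℕ) (P' : A), a' ≠ 0 ∧ c * a' < D' ^ 2 ∧
      AbsLE T ((D' : A) ^ 2 - σ * P' ^ 2) a' := by
  set ρ : ℝ := a / D ^ 2
  have hD : (0 : ℝ) < D ^ 2 := by exact_mod_cast (Nat.zero_le a).trans_lt haD
  have hρ₀ : 0 ≤ ρ := by positivity
  have hρ₁ : ρ < 1 := (div_lt_one hD).2 (by exact_mod_cast haD)
  have key : ∀ m : ℕ, ∃ (D' a' : ℕ) (P' : A), a' ≠ 0 ∧ (a' : ℝ) ≤ ρ ^ (m + 1) * D' ^ 2 ∧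
      AbsLE T ((D' : A) ^ 2 - σ * P' ^ 2) a' := by
    intro m
    induction m with
    | zero => exact ⟨D, a, P, ha, by simp [ρ, div_mul_cancel₀ _ hD.ne'], h⟩
    | succ m ih =>
      obtain ⟨D', a', P', ha', hle, habs⟩ := ih
      refine ⟨2 * D' ^ 3, 3 * D' ^ 2 * a' ^ 2 + a' ^ 3, P' * (3 * D' ^ 2 - σ * P' ^ 2),
        by positivity, ?_, hT.absLE_newton_step σ P' ha' habs⟩
      push_cast
      exact newton_error_le hρ₀ hρ₁.le (by positivity) hle
  obtain ⟨m, hm⟩ := exists_pow_lt_of_lt_one (show (0 : ℝ) < 1 / (c + 1) by positivity) hρ₁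
  obtain ⟨D', a', P', ha', hle, habs⟩ := key m
  refine ⟨D', a', P', ha', ?_, habs⟩
  have ha'₀ : (0 : ℝ) < a' := by exact_mod_cast Nat.pos_of_ne_zero ha'
  have hle' : (a' : ℝ) ≤ ρ ^ m * D' ^ 2 :=
    hle.trans <| mul_le_mul_of_nonneg_right
      (pow_le_pow_of_le_one hρ₀ hρ₁.le m.le_succ) (sq_nonneg _)
  have hcm : (c + 1) * ρ ^ m < 1 := by
    rwa [lt_div_iff₀ (by positivity), mul_comm] at hm
  have : (c : ℝ) * a' < D' ^ 2 := by nlinarith [sq_nonneg (D' : ℝ)]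
  exact_mod_cast this

theorem mem_of_isSumSq_mul_sub_one_mem (hT : IsDivisibleQuadraticModule T)
    (harch : IsArchimedeanCone T) {σ f : A} (hσ : IsSumSq σ) (h : σ * f - 1 ∈ T) : f ∈ T := by
  obtain ⟨N, hN, hf⟩ := hT.exists_absLE harch f
  obtain ⟨k, hk, hσk, -⟩ := hT.exists_absLE harch σ
  have hNσ : (N : A) * σ - 1 ∈ T := by
    convert hT.add_mem (hT.mul_mem_of_isSumSq hσ hf.1) h using 1; ring
  obtain ⟨a, ha⟩ : ∃ a, (2 * N * k) ^ 2 = a + 1 :=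
    ⟨_, (Nat.succ_pred_eq_of_pos (by positivity)).symm⟩
  have haA : ((2 * N * k : ℕ) : A) ^ 2 = a + 1 := by rw [← Nat.cast_pow, ha]; push_cast; rfl
  have ha₀ : a ≠ 0 := by
    have : 2 ≤ 2 * N * k := by nlinarith
    have := Nat.pow_le_pow_left this 2
    omega
  -- Start Newton's iteration at `P = 2N`, `D = 2Nk`, where `1 ≤ σ P² ≤ D²`.
  have base : AbsLE T (((2 * N * k : ℕ) : A) ^ 2 - σ * (2 * N : ℕ) ^ 2) a := by
    constructor
    · convert hT.add_mem (hT.natCast_mul_mem (4 * N) hNσ)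
        (hT.natCast_sub_natCast_mem (show 1 ≤ 4 * N by omega)) using 1
      rw [haA]; push_cast; ring
    · have : 4 * N ^ 2 * k ≤ 2 * a + 1 := by nlinarith
      convert hT.add_mem (hT.natCast_mul_mem (4 * N ^ 2) hσk)
        (hT.natCast_sub_natCast_mem this) using 1
      rw [haA]; push_cast; ring
  obtain ⟨D, a', P, ha', hlt, habs⟩ :=
    hT.exists_absLE_sq_sub_mul_sq_lt σ ha₀ (by omega) base (N * k + 1)
  refine hT.mem_of_natCast_mul_mem (n := k * D ^ 2)
    (Nat.mul_ne_zero hk.ne' (pow_ne_zero 2 (by rintro rfl; simp at hlt))) ?_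
  have hef := hT.mul_add_mul_mem ha' hN.ne' habs hf
  -- With `e = D² - σ P²`, `k D² f` is the sum of `k P² (σ f - 1)`, `P² (k - σ)`, `a' - e`,
  -- `k (a' N + e f)` and `D² - (N k + 1) a'`.
  convert hT.add_mem (hT.add_mem (hT.add_mem (hT.add_mem
    (hT.natCast_mul_mem k (hT.sq_mul_mem P h)) (hT.sq_mul_mem P hσk)) habs.1)
    (hT.natCast_mul_mem k hef)) (hT.natCast_sub_natCast_mem hlt.le) using 1
  push_cast; ring

end IsDivisibleQuadraticModule

/-- The divisible quadratic module generated by a quadratic module `M` and an element `b`. -/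
def divAdjoin (M : Set A) (b : A) : Set A :=
  {x | ∃ n : ℕ, n ≠ 0 ∧ ∃ t ∈ M, ∃ σ, IsSumSq σ ∧ (n : A) * x = t + σ * b}

theorem subset_divAdjoin (M : Set A) (b : A) : M ⊆ divAdjoin M b :=
  fun x hx ↦ ⟨1, one_ne_zero, x, hx, 0, .zero, by simp⟩

namespace IsQuadraticModule

variable {M : Set A}

theorem mem_divAdjoin_self (hM : IsQuadraticModule M) (b : A) : b ∈ divAdjoin M b :=
  ⟨1, one_ne_zero, 0, hM.zero_mem, 1, .one, by simp⟩

theorem isDivisibleQuadraticModule_divAdjoin (hM : IsQuadraticModule M) (b : A) :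
    IsDivisibleQuadraticModule (divAdjoin M b) where
  one_mem := subset_divAdjoin M b hM.one_mem
  add_mem := by
    rintro x y ⟨n₁, hn₁, t₁, ht₁, σ₁, hσ₁, h₁⟩ ⟨n₂, hn₂, t₂, ht₂, σ₂, hσ₂, h₂⟩
    refine ⟨n₁ * n₂, mul_ne_zero hn₁ hn₂, n₂ * t₁ + n₁ * t₂,
      hM.add_mem (hM.natCast_mul_mem _ ht₁) (hM.natCast_mul_mem _ ht₂), n₂ * σ₁ + n₁ * σ₂,
      ((IsSumSq.natCast _).mul hσ₁).add ((IsSumSq.natCast _).mul hσ₂), ?_⟩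
    push_cast
    linear_combination (n₂ : A) * h₁ + (n₁ : A) * h₂
  sq_mul_mem a := by
    rintro x ⟨n, hn, t, ht, σ, hσ, h⟩
    exact ⟨n, hn, a ^ 2 * t, hM.sq_mul_mem a ht, a ^ 2 * σ,
      (sq a ▸ .mul_self a : IsSumSq _).mul hσ, by linear_combination a ^ 2 * h⟩
  mem_of_natCast_mul_mem hm := by
    rintro ⟨n, hn, t, ht, σ, hσ, h⟩
    exact ⟨_, mul_ne_zero hn hm, t, ht, σ, hσ, by push_cast; linear_combination h⟩

end IsQuadraticModule

theorem isDivisibleQuadraticModule_sUnion {c : Set (Set A)}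
    (hc : ∀ U ∈ c, IsDivisibleQuadraticModule U) (hchain : IsChain (· ⊆ ·) c)
    (hne : c.Nonempty) : IsDivisibleQuadraticModule (⋃₀ c) where
  one_mem := let ⟨U, hU⟩ := hne; Set.mem_sUnion_of_mem (hc U hU).one_mem hU
  add_mem := by
    rintro x y ⟨U, hU, hx⟩ ⟨V, hV, hy⟩
    rcases hchain.total hU hV with h | h
    · exact Set.mem_sUnion_of_mem ((hc V hV).add_mem (h hx) hy) hV
    · exact Set.mem_sUnion_of_mem ((hc U hU).add_mem hx (h hy)) hU
  sq_mul_mem a := by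
    rintro x ⟨U, hU, hx⟩
    exact Set.mem_sUnion_of_mem ((hc U hU).sq_mul_mem a hx) hU
  mem_of_natCast_mul_mem hn := by
    rintro ⟨U, hU, hx⟩
    exact Set.mem_sUnion_of_mem ((hc U hU).mem_of_natCast_mul_mem hn hx) hU

structure IsArchimedeanTotalCone (U : Set A) : Prop extends IsDivisibleQuadraticModule U where
  isArchimedean : IsArchimedeanCone U
  neg_one_not_mem : (-1 : A) ∉ U
  mem_or_neg_mem (a : A) : a ∈ U ∨ -a ∈ U

namespace IsDivisibleQuadraticModule

variable {T : Set A}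

theorem neg_one_mem_of_neg_one_mem_divAdjoin (hT : IsDivisibleQuadraticModule T)
    (harch : IsArchimedeanCone T) {b : A} (h₁ : (-1 : A) ∈ divAdjoin T b)
    (h₂ : (-1 : A) ∈ divAdjoin T (-b)) : (-1 : A) ∈ T := by
  obtain ⟨n₁, hn₁, t₁, ht₁, σ₁, hσ₁, e₁⟩ := h₁
  obtain ⟨n₂, hn₂, t₂, ht₂, σ₂, hσ₂, e₂⟩ := h₂
  obtain ⟨K, -, hK⟩ := hT.exists_absLE harch b
  have hσ₁K := hT.add_mem (hT.mul_mem_of_isSumSq hσ₁ hK.2) ht₁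
  have hσ₂K := hT.add_mem (hT.mul_mem_of_isSumSq hσ₂ hK.1) ht₂
  -- `σ₂ t₁ + σ₁ t₂ = -(n₁ σ₂ + n₂ σ₁)`, while `K σᵢ ≥ nᵢ` since `|b| ≤ K`.
  have ht := hT.add_mem (hT.mul_mem_of_isSumSq hσ₂ ht₁) (hT.mul_mem_of_isSumSq hσ₁ ht₂)
  refine hT.mem_of_natCast_mul_mem (n := 2 * n₁ * n₂) (by positivity) ?_
  convert hT.add_mem (hT.add_mem (hT.natCast_mul_mem n₂ hσ₁K) (hT.natCast_mul_mem n₁ hσ₂K))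
    (hT.natCast_mul_mem K ht) using 1
  push_cast
  linear_combination ((n₂ : A) + K * σ₂) * e₁ + ((n₁ : A) + K * σ₁) * e₂

theorem exists_isArchimedeanTotalCone (hT : IsDivisibleQuadraticModule T)
    (harch : IsArchimedeanCone T) (hT1 : (-1 : A) ∉ T) :
    ∃ U, T ⊆ U ∧ IsArchimedeanTotalCone U := by
  obtain ⟨U, hTU, hmax⟩ := zorn_subset_nonempty
    {U | IsDivisibleQuadraticModule U ∧ T ⊆ U ∧ (-1 : A) ∉ U}
    (fun c hc hchain ⟨V, hV⟩ ↦ ⟨⋃₀ c,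
      ⟨isDivisibleQuadraticModule_sUnion (fun U hU ↦ (hc hU).1) hchain ⟨V, hV⟩,
        (hc hV).2.1.trans (Set.subset_sUnion_of_mem hV),
        fun ⟨W, hW, h⟩ ↦ (hc hW).2.2 h⟩,
      fun _ ↦ Set.subset_sUnion_of_mem⟩)
    T ⟨hT, subset_rfl, hT1⟩
  obtain ⟨hU, -, hU1⟩ := hmax.prop
  have harchU := harch.mono hTU
  have neg_one_mem : ∀ b, b ∉ U → (-1 : A) ∈ divAdjoin U b := fun b hb ↦ by
    by_contra h
    refine hb (hmax.eq_of_subset ?_ (subset_divAdjoin U b) ▸ hU.mem_divAdjoin_self b)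
    exact ⟨hU.isDivisibleQuadraticModule_divAdjoin b, hTU.trans (subset_divAdjoin U b), h⟩
  refine ⟨U, hTU, hU, harchU, hU1, fun b ↦ ?_⟩
  by_contra! h
  exact hU1 <|
    hU.neg_one_mem_of_neg_one_mem_divAdjoin harchU (neg_one_mem b h.1) (neg_one_mem _ h.2)
end IsDivisibleQuadraticModule

/-- The fractions `p / q` with `q a ≤ p` in the preorder defined by `U`. -/
def ratUpperBounds (U : Set A) (a : A) : Set ℝ :=
  {x | ∃ (p : ℤ) (q : ℕ), q ≠ 0 ∧ (p : A) - q * a ∈ U ∧ x = p / q}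

noncomputable def cutValue (U : Set A) (a : A) : ℝ :=
  sInf (ratUpperBounds U a)

namespace IsArchimedeanTotalCone

variable {U : Set A}

theorem ratUpperBounds_nonempty (hU : IsArchimedeanTotalCone U) (a : A) :
    (ratUpperBounds U a).Nonempty :=
  let ⟨n, hn⟩ := hU.isArchimedean a
  ⟨n, n, 1, one_ne_zero, by simpa using hn, by simp⟩

theorem bddBelow_ratUpperBounds (hU : IsArchimedeanTotalCone U) (a : A) :
    BddBelow (ratUpperBounds U a) := by
  obtain ⟨m, hm⟩ := hU.isArchimedean (-a)
  refine ⟨-m, ?_⟩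
  rintro _ ⟨p, q, hq, h, rfl⟩
  have hpq : (0 : ℤ) ≤ p + q * m := hU.nonneg_of_intCast_mem hU.neg_one_not_mem <| by
    convert hU.add_mem h (hU.natCast_mul_mem q hm) using 1; push_cast; ring
  rw [le_div_iff₀ (by positivity)]
  have : (0 : ℝ) ≤ p + q * m := by exact_mod_cast hpq
  linarith

theorem cutValue_le (hU : IsArchimedeanTotalCone U) {a : A} {p : ℤ} {q : ℕ} (hq : q ≠ 0)
    (h : (p : A) - q * a ∈ U) : cutValue U a ≤ p / q :=
  csInf_le (hU.bddBelow_ratUpperBounds a) ⟨p, q, hq, h, rfl⟩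

theorem sub_mem_of_cutValue_lt (hU : IsArchimedeanTotalCone U) {a : A} {r : ℚ}
    (h : cutValue U a < r) : (r.num : A) - r.den * a ∈ U := by
  obtain ⟨_, ⟨p, q, hq, hpq, rfl⟩, hlt⟩ :=
    exists_lt_of_csInf_lt (hU.ratUpperBounds_nonempty a) h
  refine hU.intCast_sub_mem_of_mul_le hq ?_ hpq
  rw [Rat.cast_def, div_lt_div_iff₀ (by positivity) (by positivity)] at hlt
  exact_mod_cast hlt.le

theorem sub_mem_of_lt_cutValue (hU : IsArchimedeanTotalCone U) {a : A} {r : ℚ}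
    (h : r < cutValue U a) : (r.den : A) * a - r.num ∈ U := by
  refine neg_sub (r.num : A) _ ▸ (hU.mem_or_neg_mem _).resolve_left fun hr ↦ h.not_ge ?_
  rw [Rat.cast_def]
  exact hU.cutValue_le r.den_nz hr

theorem cutValue_add_le (hU : IsArchimedeanTotalCone U) (a b : A) :
    cutValue U (a + b) ≤ cutValue U a + cutValue U b := by
  refine le_of_forall_lt_rat_imp_le fun t ht ↦ ?_
  obtain ⟨r, hra, hrt⟩ := exists_rat_btwn (lt_sub_iff_add_lt.2 ht)
  set s := t - r
  have hsb : cutValue U b < s := by push_cast [s]; linarith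
  have hsum := hU.add_mem (hU.natCast_mul_mem s.den (hU.sub_mem_of_cutValue_lt hra))
    (hU.natCast_mul_mem r.den (hU.sub_mem_of_cutValue_lt hsb))
  calc cutValue U (a + b) ≤ ((r.num * s.den + s.num * r.den : ℤ) : ℝ) / (r.den * s.den : ℕ) :=
        hU.cutValue_le (by positivity) (by convert hsum using 1; push_cast; ring)
    _ = t := by
      rw [show t = r + s by ring, Rat.cast_add, Rat.cast_def r, Rat.cast_def s]
      push_cast
      field_simp

theorem cutValue_neg_le (hU : IsArchimedeanTotalCone U) (a : A) :
    cutValue U (-a) ≤ -cutValue U a := by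
  rw [le_neg]
  refine le_of_forall_rat_lt_imp_le fun r hr ↦ ?_
  have h := hU.cutValue_le (a := -a) (p := -r.num) r.den_nz
    (by convert hU.sub_mem_of_lt_cutValue hr using 1; push_cast; ring)
  rw [le_neg, Rat.cast_def, ← neg_div]
  exact_mod_cast h

theorem cutValue_add (hU : IsArchimedeanTotalCone U) (a b : A) :
    cutValue U (a + b) = cutValue U a + cutValue U b := by
  refine (hU.cutValue_add_le a b).antisymm ?_
  have := hU.cutValue_add_le (a + b) (-b)
  rw [add_neg_cancel_right] at this
  linarith [hU.cutValue_neg_le b]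

noncomputable def cutValueHom (hU : IsArchimedeanTotalCone U) : A →+ ℝ :=
  AddMonoidHom.mk' (cutValue U) hU.cutValue_add

theorem cutValueHom_apply (hU : IsArchimedeanTotalCone U) (a : A) :
    hU.cutValueHom a = cutValue U a :=
  rfl

theorem cutValue_neg (hU : IsArchimedeanTotalCone U) (a : A) :
    cutValue U (-a) = -cutValue U a :=
  map_neg hU.cutValueHom a

theorem cutValue_nonneg (hU : IsArchimedeanTotalCone U) {a : A} (ha : a ∈ U) :
    0 ≤ cutValue U a := by
  have h := hU.cutValue_le (p := 0) (q := 1) one_ne_zero (a := -a) (by simpa using ha)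
  simpa [hU.cutValue_neg] using h

theorem cutValue_one (hU : IsArchimedeanTotalCone U) : cutValue U 1 = 1 := by
  have h₁ := hU.cutValue_le (p := 1) (q := 1) one_ne_zero (a := 1) (by simpa using hU.zero_mem)
  have h₂ := hU.cutValue_le (p := -1) (q := 1) one_ne_zero (a := -1) (by simpa using hU.zero_mem)
  norm_num [hU.cutValue_neg] at h₁ h₂
  linarith

theorem cutValue_sq_le (hU : IsArchimedeanTotalCone U) (a : A) :
    cutValue U (a ^ 2) ≤ cutValue U a ^ 2 := by
  rw [← sq_abs (cutValue U a), ← Real.sqrt_le_left (abs_nonneg _)]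
  refine le_of_forall_lt_rat_imp_le fun r hr ↦ ?_
  rw [Real.sqrt_le_left ((abs_nonneg _).trans hr.le)]
  obtain ⟨n, hn⟩ := Int.eq_ofNat_of_zero_le
    (Rat.num_nonneg.2 (by exact_mod_cast (abs_nonneg _).trans hr.le))
  have hn₀ : n ≠ 0 := by
    rintro rfl
    exact (abs_nonneg _).not_gt (by simpa [Rat.zero_iff_num_zero.2 hn] using hr)
  have h₁ := hU.sub_mem_of_cutValue_lt (a := a) (r := r)
    (by linarith [le_abs_self (cutValue U a)])
  have h₂ := hU.sub_mem_of_cutValue_lt (a := -a) (r := r)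
    (by linarith [neg_abs_le (cutValue U a), hU.cutValue_neg a])
  have h := hU.mul_mem_of_add_eq_natCast h₁ h₂ (n := 2 * n) (by omega)
    (by rw [hn]; push_cast; ring)
  calc cutValue U (a ^ 2) ≤ ((r.num ^ 2 : ℤ) : ℝ) / (r.den ^ 2 : ℕ) :=
        hU.cutValue_le (by positivity) (by convert h using 1; push_cast; ring)
    _ = r ^ 2 := by rw [Rat.cast_def]; push_cast; ring

theorem sq_cutValue_le (hU : IsArchimedeanTotalCone U) (a : A) :
    cutValue U a ^ 2 ≤ cutValue U (a ^ 2) := by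
  have key (r : ℚ) : 2 * r * cutValue U a - r ^ 2 ≤ cutValue U (a ^ 2) := by
    have h := hU.cutValue_nonneg (hU.sq_mem ((r.den : A) * a - r.num))
    have hexp : ((r.den : A) * a - r.num) ^ 2 =
        (r.den ^ 2 : ℤ) • a ^ 2 - (2 * r.den * r.num : ℤ) • a + (r.num ^ 2 : ℤ) • 1 := by
      simp only [zsmul_eq_mul]; push_cast; ring
    rw [← hU.cutValueHom_apply, hexp, map_add, map_sub, map_zsmul, map_zsmul, map_zsmul] at h
    simp only [hU.cutValueHom_apply, hU.cutValue_one, zsmul_eq_mul] at h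
    have hden : (0 : ℝ) < r.den := by positivity
    rw [Rat.cast_def, ← sub_nonneg, ← mul_nonneg_iff_of_pos_left (pow_pos hden 2)]
    refine h.trans_eq ?_
    push_cast
    field_simp
    ring
  have := Rat.denseRange_cast.induction_on
    (p := fun x : ℝ ↦ 2 * x * cutValue U a - x ^ 2 ≤ cutValue U (a ^ 2))
    (cutValue U a) (isClosed_le (by fun_prop) continuous_const) key
  linarith

theorem exists_ringHom_nonneg (hU : IsArchimedeanTotalCone U) :
    ∃ φ : A →+* ℝ, ∀ a ∈ U, 0 ≤ φ a :=
  ⟨hU.cutValueHom.mkRingHomOfMulSelfOfTwoNeZero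
      (fun a ↦ show cutValue U (a * a) = cutValue U a * cutValue U a by
        simpa only [sq] using (hU.cutValue_sq_le a).antisymm (hU.sq_cutValue_le a))
      two_ne_zero hU.cutValue_one,
    fun _ ha ↦ hU.cutValue_nonneg ha⟩

end IsArchimedeanTotalCone

theorem IsDivisibleQuadraticModule.exists_ringHom_nonneg {T : Set A}
    (hT : IsDivisibleQuadraticModule T) (harch : IsArchimedeanCone T) (hT1 : (-1 : A) ∉ T) :
    ∃ φ : A →+* ℝ, ∀ a ∈ T, 0 ≤ φ a :=
  let ⟨_, hTU, hU⟩ := hT.exists_isArchimedeanTotalCone harch hT1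
  let ⟨φ, hφ⟩ := hU.exists_ringHom_nonneg
  ⟨φ, fun a ha ↦ hφ a (hTU ha)⟩

end

theorem jacobi_putinar_general {A : Type*} [CommRing A] (M : Set A)
    (hM1 : (1 : A) ∈ M)
    (hMadd : ∀ x ∈ M, ∀ y ∈ M, x + y ∈ M)
    (hsq : ∀ a : A, ∀ m ∈ M, a ^ 2 * m ∈ M)
    (harch : ∀ a : A, ∃ n : ℕ, (n : A) - a ∈ M)
    (f : A) (hf : ∀ ϕ : A →+* ℝ, (∀ m ∈ M, 0 ≤ ϕ m) → 0 < ϕ f) :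
    ∃ n : ℕ, 0 < n ∧ n • f ∈ M := by
  have hM : IsQuadraticModule M := ⟨hM1, fun hx hy ↦ hMadd _ hx _ hy, fun a _ hx ↦ hsq a _ hx⟩
  have harchM : IsArchimedeanCone M := harch
  -- `divAdjoin M 0` is the divisible closure of `M`.
  have hM' := hM.isDivisibleQuadraticModule_divAdjoin 0
  suffices f ∈ divAdjoin M 0 by
    obtain ⟨n, hn, t, ht, σ, -, h⟩ := this
    exact ⟨n, Nat.pos_of_ne_zero hn, by rwa [nsmul_eq_mul, h, mul_zero, add_zero]⟩
  by_cases h : (-1 : A) ∈ divAdjoin M (-f)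
  · obtain ⟨n, hn, t, ht, σ, hσ, h⟩ := h
    refine hM'.mem_of_isSumSq_mul_sub_one_mem (harchM.mono (subset_divAdjoin M 0)) hσ ?_
    convert hM'.add_mem (subset_divAdjoin M 0 ht)
      (hM'.natCast_sub_natCast_mem (Nat.one_le_iff_ne_zero.2 hn)) using 1
    push_cast
    linear_combination h
  · obtain ⟨φ, hφ⟩ := (hM.isDivisibleQuadraticModule_divAdjoin (-f)).exists_ringHom_nonneg
      (harchM.mono (subset_divAdjoin M (-f))) h
    have hpos := hf φ fun m hm ↦ hφ m (subset_divAdjoin M (-f) hm)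
    have hneg := hφ (-f) (hM.mem_divAdjoin_self (-f))
    rw [map_neg] at hneg
    linarith

/-- Jacobi–Putinar: if `M` is an archimedean quadratic module in `A` and `f ∈ A`
satisfies `ϕ(f) > 0` for every ring homomorphism `ϕ : A → ℝ` nonnegative on `M`,
then `nf ∈ M` for some `n ∈ ℕ`. -/
theorem jacobi_putinar {A : Type*} [CommRing A] (M : Set A)
    (hM0 : (0 : A) ∈ M) (hM1 : (1 : A) ∈ M)
    (hMadd : ∀ x ∈ M, ∀ y ∈ M, x + y ∈ M)
    (hsq : ∀ a : A, ∀ m ∈ M, a ^ 2 * m ∈ M)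
    (harch : ∀ a : A, ∃ n : ℕ, (n : A) - a ∈ M)
    (f : A) (hf : ∀ ϕ : A →+* ℝ, (∀ m ∈ M, 0 ≤ ϕ m) → 0 < ϕ f) :
    ∃ n : ℕ, 0 < n ∧ n • f ∈ M :=
  jacobi_putinar_general M hM1 hMadd hsq harch f hf
end

section
/- Let $S$ be an archimedean subsemiring of a commutative ring $A$ and $M$ an $S$-module. Let $f \in A$ such that for every maximal ideal $\mathfrak{m}$ of $A$ there exists $s \in S$ with $s \notin \mathfrak{m}$ and $sf \in M$. Then $nf \in M$ for some $n \in \mathbb{N}$. -/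
/-!
Pull `M` back along `a ↦ a * f` to `P = {a | a * f ∈ M}`, an additive monoid stable under `S`;
the goal becomes `n ∈ P`. No maximal ideal contains `S ∩ P`, and the archimedean property turns
this into `z ∈ S ∩ P` with `u = 1 + z ∈ P`, an order unit of `(A, P)`. If no `n - u` lay in `P`,
the Goodearl–Handelman criterion would give a state `φ` of `(A, P, u)` with `φ 1 ≤ 0`, and by
Krein–Milman an extreme one. Extreme states over an archimedean semiring are multiplicative,
`φ (a * x) = χ a * φ x` for a ring map `χ : A →+* ℝ`. A maximal ideal containing `ker χ` misses
some `s ∈ S ∩ P`, so `χ s > 0` and `0 ≤ φ s = χ s * φ 1` gives `φ 1 = 0`; but then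
`1 = φ u = χ u * φ 1 = 0`.
-/

open Set

theorem IsCompact.exists_mem_extremePoints_le {E : Type*} [AddCommGroup E] [Module ℝ E]
    [TopologicalSpace E] [T2Space E] [IsTopologicalAddGroup E] [ContinuousSMul ℝ E]
    [LocallyConvexSpace ℝ E] {K : Set E} (hK : IsCompact K) (l : E →L[ℝ] ℝ) {c : ℝ}
    (h : ∃ x ∈ K, l x ≤ c) : ∃ x ∈ extremePoints ℝ K, l x ≤ c := by
  obtain ⟨x, hxK, hxc⟩ := h
  have hexp : IsExposed ℝ K {y ∈ K | ∀ z ∈ K, (-l) z ≤ (-l) y} := fun _ => ⟨-l, rfl⟩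
  obtain ⟨y, hyK, hy⟩ := hK.exists_isMinOn ⟨x, hxK⟩ l.continuous.continuousOn
  obtain ⟨e, he⟩ := (hexp.isCompact hK).extremePoints_nonempty
    ⟨y, hyK, fun z hz => neg_le_neg (hy hz)⟩
  refine ⟨e, hexp.isExtreme.extremePoints_subset_extremePoints he, ?_⟩
  have : l e ≤ l x := by simpa using he.1.2 x hxK
  linarith

namespace AddSubmonoid

variable {G : Type*} [AddCommGroup G]

def IsOrderUnit (P : AddSubmonoid G) (u : G) : Prop :=
  ∀ x, ∃ n : ℕ, n • u - x ∈ P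

/-- States are plain functions `G → ℝ`, so that they form a compact subset of a locally convex
space and Krein–Milman applies. -/
def states (P : AddSubmonoid G) (u : G) : Set (G → ℝ) :=
  {φ | (∀ x y, φ (x + y) = φ x + φ y) ∧ (∀ x ∈ P, 0 ≤ φ x) ∧ φ u = 1}

/-- Such an `H` is the graph of a positive additive map defined on the projection of `H` to `G`. -/
def IsPositiveGraph (P : AddSubmonoid G) (H : AddSubgroup (G × ℝ)) : Prop :=
  ∀ p ∈ H, p.1 ∈ P → 0 ≤ p.2

variable {P : AddSubmonoid G} {u : G}

theorem exists_addMonoidHom_of_mem_states {φ : G → ℝ} (hφ : φ ∈ P.states u) :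
    ∃ ψ : G →+ ℝ, ⇑ψ = φ := ⟨AddMonoidHom.mk' φ hφ.1, rfl⟩

theorem IsPositiveGraph.eq_of_mem {H : AddSubgroup (G × ℝ)} (hH : P.IsPositiveGraph H) {x : G}
    {r r' : ℝ} (hr : (x, r) ∈ H) (hr' : (x, r') ∈ H) : r = r' := by
  have h₁ := hH _ (sub_mem hr hr') (by simp)
  have h₂ := hH _ (sub_mem hr' hr) (by simp)
  simp only [Prod.snd_sub, sub_nonneg] at h₁ h₂
  exact le_antisymm h₂ h₁

theorem IsPositiveGraph.mem_states {H : AddSubgroup (G × ℝ)} (hH : P.IsPositiveGraph H)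
    (huH : (u, 1) ∈ H) {φ : G → ℝ} (hφ : ∀ x, (x, φ x) ∈ H) : φ ∈ P.states u :=
  ⟨fun x y => hH.eq_of_mem (hφ (x + y)) (add_mem (hφ x) (hφ y)),
    fun x hx => hH _ (hφ x) hx, hH.eq_of_mem (hφ u) huH⟩

theorem IsPositiveGraph.exists_sup_zmultiples (hunit : P.IsOrderUnit u)
    {H : AddSubgroup (G × ℝ)} (hH : P.IsPositiveGraph H) (huH : (u, 1) ∈ H) (x : G) :
    ∃ r : ℝ, P.IsPositiveGraph (H ⊔ AddSubgroup.zmultiples (x, r)) := by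
  -- the new value at `x` is the supremum of the lower bounds `-p.2 / n` that `H` forces on it
  set L : Set ℝ := {t | ∃ p ∈ H, ∃ n : ℕ, 0 < n ∧ p.1 + n • x ∈ P ∧ t = -p.2 / n}
  have hmul : ∀ m : ℕ, (m • u, (m : ℝ)) ∈ H := fun m => by
    simpa using nsmul_mem huH m
  have hLle : ∀ t ∈ L, ∀ p ∈ H, ∀ n : ℕ, 0 < n → p.1 - n • x ∈ P → t ≤ p.2 / n := by
    rintro t ⟨q, hq, m, hm, hqm, rfl⟩ p hp n hn hpn
    have hpos := hH _ (add_mem (nsmul_mem hq n) (nsmul_mem hp m)) <| by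
      convert add_mem (nsmul_mem hqm n) (nsmul_mem hpn m) using 1
      simp only [Prod.fst_add, Prod.smul_fst, smul_add, smul_sub, smul_comm n m x]
      abel
    simp only [Prod.snd_add, Prod.smul_snd, nsmul_eq_mul] at hpos
    rw [div_le_div_iff₀ (by exact_mod_cast hm) (by exact_mod_cast hn)]
    nlinarith
  obtain ⟨m, hm⟩ := hunit (-x)
  obtain ⟨m', hm'⟩ := hunit x
  have hLne : L.Nonempty := ⟨_, _, hmul m, 1, one_pos, by simpa [← sub_eq_add_neg] using hm, rfl⟩
  have hLbdd : BddAbove L := ⟨_, fun t ht => hLle t ht _ (hmul m') 1 one_pos (by simpa using hm')⟩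
  refine ⟨sSup L, ?_⟩
  have hlow : ∀ p ∈ H, ∀ n : ℕ, p.1 + n • x ∈ P → 0 ≤ p.2 + n * sSup L := by
    intro p hp n hpn
    rcases n.eq_zero_or_pos with rfl | hn
    · simpa using hH p hp (by simpa using hpn)
    · have := le_csSup hLbdd ⟨p, hp, n, hn, hpn, rfl⟩
      rw [div_le_iff₀ (by exact_mod_cast hn)] at this
      linarith
  have hup : ∀ p ∈ H, ∀ n : ℕ, p.1 - n • x ∈ P → 0 ≤ p.2 - n * sSup L := by
    intro p hp n hpn
    rcases n.eq_zero_or_pos with rfl | hn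
    · simpa using hH p hp (by simpa using hpn)
    · have := csSup_le hLne fun t ht => hLle t ht p hp n hn hpn
      rw [le_div_iff₀ (by exact_mod_cast hn)] at this
      linarith
  intro q hq hq₁
  obtain ⟨p, hp, _, ⟨k, rfl⟩, rfl⟩ := AddSubgroup.mem_sup.1 hq
  obtain ⟨n, rfl | rfl⟩ := k.eq_nat_or_neg
  · simpa using hlow p hp n (by simpa using hq₁)
  · simpa [← sub_eq_add_neg] using hup p hp n (by simpa [← sub_eq_add_neg] using hq₁)

theorem states_nonempty (hu : u ∈ P) (hunit : P.IsOrderUnit u) (hneg : -u ∉ P) :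
    (P.states u).Nonempty := by
  have h₀ : P.IsPositiveGraph (AddSubgroup.zmultiples (u, 1)) := by
    rintro _ ⟨k, rfl⟩ hk
    obtain ⟨n, rfl | rfl⟩ := k.eq_nat_or_neg
    · simp
    · rcases n with _ | n
      · simp
      · refine absurd ?_ hneg
        have hk' : (-((n + 1 : ℕ) : ℤ)) • u ∈ P := hk
        rw [neg_smul, natCast_zsmul] at hk'
        convert add_mem hk' (nsmul_mem hu n) using 1
        rw [succ_nsmul]
        abel
  obtain ⟨H, -, hH⟩ := zorn_le_nonempty₀ {H | (u, 1) ∈ H ∧ P.IsPositiveGraph H}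
    (fun c hc hchain K hK => by
      refine ⟨sSup c, ⟨le_sSup hK (hc hK).1, fun p hp => ?_⟩, fun _ => le_sSup⟩
      obtain ⟨K', hK', hpK'⟩ := (AddSubgroup.mem_sSup_of_directedOn ⟨K, hK⟩
        hchain.directedOn).1 hp
      exact (hc hK').2 p hpK')
    _ ⟨AddSubgroup.mem_zmultiples _, h₀⟩
  have htot : ∀ x, ∃ r, (x, r) ∈ H := fun x => by
    obtain ⟨r, hr⟩ := hH.prop.2.exists_sup_zmultiples hunit hH.prop.1 x
    exact ⟨r, hH.le_of_ge ⟨le_sup_left (a := H) hH.prop.1, hr⟩ le_sup_left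
      (le_sup_right (a := H) (AddSubgroup.mem_zmultiples _))⟩
  choose φ hφ using htot
  exact ⟨φ, hH.prop.2.mem_states hH.prop.1 hφ⟩

theorem exists_mem_states_le_zero (hu : u ∈ P) (hunit : P.IsOrderUnit u) {x : G}
    (hx : ∀ n : ℕ, 0 < n → n • x - u ∉ P) : ∃ φ ∈ P.states u, φ x ≤ 0 := by
  -- the states of the cone enlarged by `-x` are the states that are nonpositive at `x`
  set P' := P ⊔ closure {-x}
  have hneg : -u ∉ P' := by
    intro h
    obtain ⟨p, hp, _, hq, hpq⟩ := mem_sup.1 h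
    obtain ⟨n, rfl⟩ := mem_closure_singleton.1 hq
    rcases n.eq_zero_or_pos with rfl | hn
    · obtain ⟨m, hm⟩ := hunit (-x)
      refine hx 1 one_pos ?_
      convert add_mem hm (nsmul_mem (show -u ∈ P by simpa [← hpq] using hp) (m + 1)) using 1
      simp only [succ_nsmul, smul_neg]
      abel
    · refine hx n hn (by convert hp using 1; rw [← neg_neg u, ← hpq, smul_neg]; abel)
  obtain ⟨φ, hφ⟩ := states_nonempty (le_sup_left (a := P) hu)
    (fun y => (hunit y).imp fun _ hn => le_sup_left (a := P) hn) hneg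
  refine ⟨φ, ⟨hφ.1, fun y hy => hφ.2.1 y (le_sup_left (a := P) hy), hφ.2.2⟩, ?_⟩
  obtain ⟨ψ, rfl⟩ := exists_addMonoidHom_of_mem_states hφ
  simpa using hφ.2.1 (-x) (le_sup_right (a := P) (subset_closure rfl))

theorem isCompact_states (hunit : P.IsOrderUnit u) : IsCompact (P.states u) := by
  choose c hc using hunit
  have hsub : P.states u ⊆ univ.pi fun x => Icc (-(c (-x) : ℝ)) (c x) := by
    intro φ hφ
    obtain ⟨ψ, rfl⟩ := exists_addMonoidHom_of_mem_states hφ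
    simp only [mem_univ_pi, mem_Icc]
    intro x
    have h₁ := hφ.2.1 _ (hc x)
    have h₂ := hφ.2.1 _ (hc (-x))
    simp only [map_sub, map_nsmul, map_neg, hφ.2.2, nsmul_eq_mul, mul_one] at h₁ h₂
    constructor <;> linarith
  have hclosed : IsClosed (P.states u) := by
    simp only [states, ofPred_and]
    refine (isClosed_setOfPred_map_add G ℝ).inter
      (IsClosed.inter ?_ (isClosed_eq (continuous_apply u) continuous_const))
    simp only [ofPred_forall]
    exact isClosed_biInter fun x _ => isClosed_le continuous_const (continuous_apply x)
  exact (isCompact_univ_pi fun x => isCompact_Icc).of_isClosed_subset hclosed hsub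

end AddSubmonoid

def Subsemiring.IsArchimedean {A : Type*} [Ring A] (S : Subsemiring A) : Prop :=
  ∀ a : A, ∃ n : ℕ, (n : A) - a ∈ S

section PureStates

open AddSubmonoid

variable {A G : Type*} [CommRing A] [AddCommGroup G] [Module A G] {P : AddSubmonoid G} {u : G}
  {φ : G → ℝ}

theorem map_smul_eq_mul_of_mem_extremePoints_states (hφ : φ ∈ extremePoints ℝ (P.states u))
    {t t' : A} (ht : ∀ x ∈ P, t • x ∈ P) (ht' : ∀ x ∈ P, t' • x ∈ P) {m : ℕ}
    (htt' : t + t' = m) (hpos : 0 < φ (t • u)) (hpos' : 0 < φ (t' • u)) (x : G) :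
    φ (t • x) = φ (t • u) * φ x := by
  obtain ⟨ψ, rfl⟩ := exists_addMonoidHom_of_mem_states hφ.1
  have hψu : ψ u = 1 := hφ.1.2.2
  have hsplit : ∀ y, ψ (t • y) + ψ (t' • y) = m * ψ y := fun y => by
    rw [← map_add, ← add_smul, htt', Nat.cast_smul_eq_nsmul, map_nsmul, nsmul_eq_mul]
  have hm : (0 : ℝ) < m := by
    have h := hsplit u
    rw [hψu, mul_one] at h
    linarith
  have hstate : ∀ {s : A}, (∀ x ∈ P, s • x ∈ P) → 0 < ψ (s • u) →
      (fun y => ψ (s • y) / ψ (s • u)) ∈ P.states u := fun hs hpos =>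
    ⟨fun x y => by simp only [smul_add, map_add, add_div],
      fun x hx => div_nonneg (hφ.1.2.1 _ (hs x hx)) hpos.le, div_self hpos.ne'⟩
  -- `ψ` is a convex combination of the states `ψ (t • ·)` and `ψ (t' • ·)`, normalized at `u`
  have hseg : ⇑ψ ∈ openSegment ℝ (fun y => ψ (t • y) / ψ (t • u))
      (fun y => ψ (t' • y) / ψ (t' • u)) := by
    refine ⟨ψ (t • u) / m, ψ (t' • u) / m, by positivity, by positivity, ?_, ?_⟩
    · rw [← add_div, hsplit, hψu, mul_one, div_self hm.ne']
    · ext y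
      simp only [Pi.add_apply, Pi.smul_apply, smul_eq_mul]
      field_simp
      linear_combination hsplit y
  have := congrFun (hφ.2 (hstate ht hpos) (hstate ht' hpos') hseg) x
  field_simp at this
  linear_combination this

theorem exists_ringHom_of_mem_extremePoints_states {S : Subsemiring A} (harch : S.IsArchimedean)
    (hSP : ∀ s ∈ S, ∀ x ∈ P, s • x ∈ P) (hu : u ∈ P) (hφ : φ ∈ extremePoints ℝ (P.states u)) :
    ∃ χ : A →+* ℝ, ∀ a x, φ (a • x) = χ a * φ x := by
  obtain ⟨ψ, rfl⟩ := exists_addMonoidHom_of_mem_states hφ.1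
  have hψu : ψ u = 1 := hφ.1.2.2
  have hpos : ∀ s ∈ S, 0 < ψ ((s + 1 : A) • u) := fun s hs => by
    rw [add_smul, one_smul, map_add, hψu]
    linarith [hφ.1.2.1 _ (hSP s hs u hu)]
  have hmul : ∀ (a : A) x, ψ (a • x) = ψ (a • u) * ψ x := by
    intro a x
    obtain ⟨n, hn⟩ := harch a
    obtain ⟨m, hm⟩ := harch (-a)
    rw [sub_neg_eq_add] at hm
    -- `m + a + 1` and `n - a + 1` lie in `S`, are positive at `u` and sum to a natural number
    have key := map_smul_eq_mul_of_mem_extremePoints_states hφ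
      (hSP _ (add_mem hm (one_mem S))) (hSP _ (add_mem hn (one_mem S))) (m := m + n + 2)
      (by push_cast; ring) (hpos _ hm) (hpos _ hn) x
    simp only [add_smul, one_smul, map_add, Nat.cast_smul_eq_nsmul, map_nsmul, nsmul_eq_mul,
      hψu] at key
    linear_combination key
  exact ⟨{ toFun := fun a => ψ (a • u)
           map_one' := by rw [one_smul, hψu]
           map_mul' := fun a b => by rw [mul_smul, hmul]
           map_zero' := by rw [zero_smul, map_zero]
           map_add' := fun a b => by rw [add_smul, map_add] }, hmul⟩

end PureStates

section LocalGlobal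

open AddSubmonoid

variable {A : Type*} [CommRing A] {S : Subsemiring A}

theorem exists_sub_eq_one_of_forall_isMaximal (harch : S.IsArchimedean) {W : AddSubmonoid A}
    (hSW : ∀ s ∈ S, ∀ w ∈ W, s * w ∈ W) (hW : ∀ 𝔪 : Ideal A, 𝔪.IsMaximal → ∃ w ∈ W, w ∉ 𝔪) :
    ∃ w ∈ W, ∃ z ∈ W, w - z = 1 := by
  let J : Ideal A :=
    { carrier := {a | ∃ w ∈ W, ∃ z ∈ W, w - z = a}
      zero_mem' := ⟨0, W.zero_mem, 0, W.zero_mem, sub_zero 0⟩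
      add_mem' := by
        rintro _ _ ⟨w, hw, z, hz, rfl⟩ ⟨w', hw', z', hz', rfl⟩
        exact ⟨w + w', add_mem hw hw', z + z', add_mem hz hz', by ring⟩
      smul_mem' := by
        rintro c _ ⟨w, hw, z, hz, rfl⟩
        obtain ⟨n, hn⟩ := harch c
        exact ⟨n • w + (n - c) * z, add_mem (nsmul_mem hw n) (hSW _ hn z hz),
          n • z + (n - c) * w, add_mem (nsmul_mem hz n) (hSW _ hn w hw),
          by simp only [nsmul_eq_mul, smul_eq_mul]; ring⟩ }
  suffices J = ⊤ from (this ▸ Submodule.mem_top : (1 : A) ∈ J)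
  by_contra hJ
  obtain ⟨𝔪, h𝔪, hJ𝔪⟩ := Ideal.exists_le_maximal J hJ
  obtain ⟨w, hw, hw𝔪⟩ := hW 𝔪 h𝔪
  exact hw𝔪 (hJ𝔪 ⟨w, hw, 0, W.zero_mem, sub_zero w⟩)

theorem isOrderUnit_one_add (harch : S.IsArchimedean) {P : AddSubmonoid A}
    (hSP : ∀ s ∈ S, ∀ a ∈ P, s * a ∈ P) {z : A} (hzS : z ∈ S) (hzP : z ∈ P) (hP : 1 + z ∈ P) :
    P.IsOrderUnit (1 + z) := by
  intro a
  obtain ⟨k, hk⟩ := harch (-a)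
  rw [sub_neg_eq_add] at hk
  have hb : a + k * (1 + z) ∈ S := by
    convert add_mem hk (nsmul_mem hzS k) using 1
    rw [nsmul_eq_mul]
    ring
  obtain ⟨n, hn⟩ := harch (a + k * (1 + z))
  -- with `b = a + k (1 + z) ∈ S`: `n (1 + z) - a = (n - b) (1 + z) + b z + k (1 + z)`
  refine ⟨n, ?_⟩
  convert add_mem (add_mem (hSP _ hn _ hP) (hSP _ hb _ hzP)) (nsmul_mem hP k) using 1
  simp only [nsmul_eq_mul]
  ring

theorem exists_natCast_mem_of_forall_isMaximal (harch : S.IsArchimedean) {P : AddSubmonoid A}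
    (hSP : ∀ s ∈ S, ∀ a ∈ P, s * a ∈ P)
    (hloc : ∀ 𝔪 : Ideal A, 𝔪.IsMaximal → ∃ s ∈ S, s ∉ 𝔪 ∧ s ∈ P) :
    ∃ n : ℕ, 0 < n ∧ (n : A) ∈ P := by
  obtain ⟨w, ⟨-, hwP⟩, z, ⟨hzS, hzP⟩, hwz⟩ := exists_sub_eq_one_of_forall_isMaximal
    (W := S.toAddSubmonoid ⊓ P) harch (fun s hs w hw => ⟨S.mul_mem hs hw.1, hSP s hs w hw.2⟩)
    fun 𝔪 h𝔪 => by
      obtain ⟨s, hsS, hs𝔪, hsP⟩ := hloc 𝔪 h𝔪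
      exact ⟨s, ⟨hsS, hsP⟩, hs𝔪⟩
  obtain rfl : w = 1 + z := by rw [← hwz]; ring
  have hunit := isOrderUnit_one_add harch hSP hzS hzP hwP
  by_contra! hno
  have hx : ∀ n : ℕ, 0 < n → n • (1 : A) - (1 + z) ∉ P := fun n hn h =>
    hno n hn (by simpa using add_mem h hwP)
  obtain ⟨φ, hφ, hφ1⟩ := (isCompact_states hunit).exists_mem_extremePoints_le
    (ContinuousLinearMap.proj 1) (exists_mem_states_le_zero hwP hunit hx)
  obtain ⟨χ, hχ⟩ := exists_ringHom_of_mem_extremePoints_states harch hSP hwP hφ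
  obtain ⟨𝔪, h𝔪, hker⟩ := Ideal.exists_le_maximal _ (RingHom.ker_ne_top χ)
  obtain ⟨s, hsS, hs𝔪, hsP⟩ := hloc 𝔪 h𝔪
  have hu : φ (1 + z) = 1 := hφ.1.2.2
  have hχs : 0 < χ s := by
    have h := hφ.1.2.1 _ (hSP s hsS _ hwP)
    rw [← smul_eq_mul, hχ, hu, mul_one] at h
    exact h.lt_of_ne' fun h0 => hs𝔪 (hker h0)
  have hφ1' : φ 1 = 0 := by
    have h := hφ.1.2.1 s hsP
    rw [← mul_one s, ← smul_eq_mul, hχ] at h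
    exact le_antisymm hφ1 (nonneg_of_mul_nonneg_right h hχs)
  have := hχ (1 + z) 1
  rw [smul_eq_mul, mul_one, hu, hφ1', mul_zero] at this
  exact one_ne_zero this

end LocalGlobal

theorem local_global_criterion_general {A : Type*} [CommRing A] (S M : Set A)
    (hS0 : (0 : A) ∈ S) (hS1 : (1 : A) ∈ S)
    (hSadd : ∀ x ∈ S, ∀ y ∈ S, x + y ∈ S)
    (hSmul : ∀ x ∈ S, ∀ y ∈ S, x * y ∈ S)
    (harch : ∀ a : A, ∃ n : ℕ, (n : A) - a ∈ S)
    (hM0 : (0 : A) ∈ M)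
    (hMadd : ∀ x ∈ M, ∀ y ∈ M, x + y ∈ M)
    (hSM : ∀ s ∈ S, ∀ m ∈ M, s * m ∈ M)
    (f : A)
    (hloc : ∀ 𝔪 : Ideal A, 𝔪.IsMaximal → ∃ s ∈ S, s ∉ 𝔪 ∧ s * f ∈ M) :
    ∃ n : ℕ, 0 < n ∧ n • f ∈ M := by
  let S' : Subsemiring A :=
    { carrier := S, zero_mem' := hS0, one_mem' := hS1
      add_mem' := fun ha hb => hSadd _ ha _ hb, mul_mem' := fun ha hb => hSmul _ ha _ hb }
  let P : AddSubmonoid A :=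
    { carrier := {a | a * f ∈ M}, zero_mem' := by simpa using hM0
      add_mem' := fun ha hb => by simpa [add_mul] using hMadd _ ha _ hb }
  obtain ⟨n, hn, hnP⟩ := exists_natCast_mem_of_forall_isMaximal (S := S') harch (P := P)
    (fun s hs a ha => show s * a * f ∈ M by rw [mul_assoc]; exact hSM s hs _ ha) hloc
  exact ⟨n, hn, by rwa [nsmul_eq_mul]⟩

/-- Local–global criterion: let `S` be an archimedean subsemiring of `A` and `M` an
`S`-module. If `f ∈ A` is such that for every maximal ideal `𝔪` of `A` there exists
`s ∈ S` with `s ∉ 𝔪` and `sf ∈ M`, then `nf ∈ M` for some `n ∈ ℕ`. -/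
theorem local_global_criterion {A : Type*} [CommRing A] (S M : Set A)
    (hS0 : (0 : A) ∈ S) (hS1 : (1 : A) ∈ S)
    (hSadd : ∀ x ∈ S, ∀ y ∈ S, x + y ∈ S)
    (hSmul : ∀ x ∈ S, ∀ y ∈ S, x * y ∈ S)
    (harch : ∀ a : A, ∃ n : ℕ, (n : A) - a ∈ S)
    (hM0 : (0 : A) ∈ M) (hM1 : (1 : A) ∈ M)
    (hMadd : ∀ x ∈ M, ∀ y ∈ M, x + y ∈ M)
    (hSM : ∀ s ∈ S, ∀ m ∈ M, s * m ∈ M)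
    (f : A)
    (hloc : ∀ 𝔪 : Ideal A, 𝔪.IsMaximal → ∃ s ∈ S, s ∉ 𝔪 ∧ s * f ∈ M) :
    ∃ n : ℕ, 0 < n ∧ n • f ∈ M :=
  local_global_criterion_general S M hS0 hS1 hSadd hSmul harch hM0 hMadd hSM f hloc
end
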